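/- arXiv:1711.04349 — 6 statements merged into one kernel-verified Lean document; each statement's English description precedes it below -/
import Mathlib

section
/- Assume N ≥ 4 and 2 ≤ n₁ ≤ N−2. For all real numbers a, b > 0 with a + b = 1, the variance of a·R_{1,(a)} + b·R_{2,(a)} under the permutation null distribution satisfies Var(a·R_{1,(a)} + b·R_{2,(a)}) ≥ Var(R_{w,(a)}), where R_{w,(a)} = (1−p̂)·R_{1,(a)} + p̂·R_{2,(a)} with p̂ = (n₁−1)/(N−2). (Extended weighted edge-count statistic minimizes the variance among all convex combinations of the two within-sample averaging edge-counts.) -/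
open Finset MeasureTheory
open scoped BigOperators Classical

noncomputable section

/-!
Write `R₁, R₂, R_w` for `R_{1,(a)}, R_{2,(a)}, R_{w,(a)}` and let `X i S` indicate that
observation `i` lies in the first sample `S`. Both `R₁` and `R₂` are sums, over pairs `i ≠ j`,
of fixed weights times `X i * X j`, resp. `(1 - X i) * (1 - X j)`. Hence
`(N - 2) R_w = (N - n₁ - 1) R₁ + (n₁ - 1) R₂` is a weighted sum of the kernels
`(N - n₁ - 1) X i X j + (n₁ - 1) (1 - X i) (1 - X j)`, and the first three moments of simple
random sampling show that each such kernel is uncorrelated with every single `X k`.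
The difference `R₁ - R₂` is affine in the `X k`, so it is uncorrelated with `R_w`, and
`a R₁ + b R₂ = R_w + (a - 1 + p̂) (R₁ - R₂)` gives
`Var (a R₁ + b R₂) = Var R_w + (a - 1 + p̂)² Var (R₁ - R₂)`.
-/

section Covariance

variable {β : Type*} (s : Finset β)

def uniformCov (f g : β → ℝ) : ℝ :=
  𝔼 x ∈ s, (f x - 𝔼 y ∈ s, f y) * (g x - 𝔼 y ∈ s, g y)

variable {s}

lemma uniformCov_comm (f g : β → ℝ) : uniformCov s f g = uniformCov s g f := by
  simp only [uniformCov, mul_comm]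

lemma uniformCov_eq_expect_mul_sub (f g : β → ℝ) :
    uniformCov s f g = 𝔼 x ∈ s, f x * g x - (𝔼 x ∈ s, f x) * 𝔼 x ∈ s, g x := by
  obtain rfl | hs := s.eq_empty_or_nonempty
  · simp [uniformCov]
  simp only [uniformCov, sub_mul, mul_sub, expect_sub_distrib, ← expect_mul, ← mul_expect,
    expect_const hs]
  ring

lemma uniformCov_sum_left {ι : Type*} (t : Finset ι) (f : ι → β → ℝ) (g : β → ℝ) :
    uniformCov s (fun x => ∑ i ∈ t, f i x) g = ∑ i ∈ t, uniformCov s (f i) g := by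
  simp only [uniformCov_eq_expect_mul_sub, sum_mul, sum_sub_distrib, expect_sum_comm]

lemma uniformCov_add_left (f₁ f₂ g : β → ℝ) :
    uniformCov s (fun x => f₁ x + f₂ x) g = uniformCov s f₁ g + uniformCov s f₂ g := by
  simp only [uniformCov_eq_expect_mul_sub, add_mul, expect_add_distrib]
  ring

lemma uniformCov_mul_left (c : ℝ) (f g : β → ℝ) :
    uniformCov s (fun x => c * f x) g = c * uniformCov s f g := by
  simp only [uniformCov_eq_expect_mul_sub, mul_assoc, ← mul_expect]
  ring

lemma uniformCov_div_left (c : ℝ) (f g : β → ℝ) :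
    uniformCov s (fun x => f x / c) g = uniformCov s f g / c := by
  simp only [div_eq_inv_mul, uniformCov_mul_left]

lemma uniformCov_const_left (c : ℝ) (g : β → ℝ) : uniformCov s (fun _ => c) g = 0 := by
  obtain rfl | hs := s.eq_empty_or_nonempty
  · simp [uniformCov]
  simp [uniformCov, expect_const hs]

lemma uniformCov_add_const_left (f : β → ℝ) (c : ℝ) (g : β → ℝ) :
    uniformCov s (fun x => f x + c) g = uniformCov s f g := by
  rw [uniformCov_add_left, uniformCov_const_left, add_zero]

lemma uniformCov_congr_left {f f' : β → ℝ} (h : ∀ x ∈ s, f x = f' x) (g : β → ℝ) :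
    uniformCov s f g = uniformCov s f' g := by
  unfold uniformCov
  rw [expect_congr rfl h]
  exact expect_congr rfl fun x hx => by rw [h x hx]

lemma uniformCov_self_nonneg (f : β → ℝ) : 0 ≤ uniformCov s f f :=
  expect_nonneg fun _ _ => mul_self_nonneg _

lemma uniformCov_self_add_mul {f g : β → ℝ} (h : uniformCov s f g = 0) (t : ℝ) :
    uniformCov s (fun x => f x + t * g x) (fun x => f x + t * g x)
      = uniformCov s f f + t ^ 2 * uniformCov s g g := by
  have hright : ∀ k, uniformCov s k (fun x => f x + t * g x)
      = uniformCov s k f + t * uniformCov s k g := fun k => by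
    rw [uniformCov_comm, uniformCov_add_left, uniformCov_mul_left, uniformCov_comm f,
      uniformCov_comm g]
  rw [hright, uniformCov_add_left, uniformCov_add_left, uniformCov_mul_left,
    uniformCov_mul_left, uniformCov_comm g f, h]
  ring

end Covariance

section Sampling

variable {α : Type*} [Fintype α] [DecidableEq α] {n : ℕ}

def sampleIndicator (i : α) (S : Finset α) : ℝ := if i ∈ S then 1 else 0

local notation "X" => sampleIndicator

-- Descending factorials keep the formula valid when `n < #T`, where both sides vanish.
lemma expect_powersetCard_ite_subset (hn : n ≤ Fintype.card α) (T : Finset α) :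
    𝔼 S ∈ powersetCard n univ, (if T ⊆ S then (1 : ℝ) else 0)
      = n.descFactorial #T / (Fintype.card α).descFactorial #T := by
  set N := Fintype.card α
  rw [expect_eq_sum_div_card, sum_boole, card_powersetCard, card_univ]
  have hchoose : (N.choose n : ℝ) ≠ 0 := by exact_mod_cast (Nat.choose_pos hn).ne'
  have hdesc : (N.descFactorial #T : ℝ) ≠ 0 := by
    exact_mod_cast (Nat.descFactorial_pos.2 (card_le_univ T)).ne'
  rw [div_eq_div_iff hchoose hdesc]
  rcases le_or_gt #T n with hTn | hnT
  · rw [card_filter_powersetCard_subset T univ n (subset_univ T) hTn, card_univ]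
    norm_cast
    rw [Nat.descFactorial_eq_factorial_mul_choose, Nat.descFactorial_eq_factorial_mul_choose]
    calc _ = Nat.factorial #T * (N.choose #T * (N - #T).choose (n - #T)) := by ring
      _ = _ := by rw [← Nat.choose_mul hTn]; ring
  · rw [(Nat.descFactorial_eq_zero_iff_lt).2 hnT, filter_false_of_mem fun S hS hTS => ?_]
    · simp
    · have := card_le_card hTS
      rw [(mem_powersetCard.1 hS).2] at this
      omega

lemma Nat.cast_descFactorial_three (a : ℕ) :
    (a.descFactorial 3 : ℝ) = a * (a - 1) * (a - 2) := by
  rcases a with _ | _ | _ | a <;> simp [Nat.descFactorial_succ]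
  ring

lemma expect_sampleIndicator (hn : n ≤ Fintype.card α) (i : α) :
    𝔼 S ∈ powersetCard n univ, X i S = n / Fintype.card α := by
  simpa [sampleIndicator] using expect_powersetCard_ite_subset hn {i}

lemma expect_sampleIndicator_mul (hn : n ≤ Fintype.card α) {i j : α} (hij : i ≠ j) :
    𝔼 S ∈ powersetCard n univ, X i S * X j S
      = n * (n - 1) / (Fintype.card α * (Fintype.card α - 1)) := by
  have := expect_powersetCard_ite_subset hn {i, j}
  rw [card_pair hij, Nat.cast_descFactorial_two, Nat.cast_descFactorial_two] at this
  rw [← this]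
  refine expect_congr rfl fun S _ => ?_
  simp only [sampleIndicator, insert_subset_iff, singleton_subset_iff]
  split_ifs <;> simp_all

lemma expect_sampleIndicator_mul_mul (hn : n ≤ Fintype.card α) {i j k : α} (hij : i ≠ j)
    (hik : i ≠ k) (hjk : j ≠ k) :
    𝔼 S ∈ powersetCard n univ, X i S * (X j S * X k S)
      = n * (n - 1) * (n - 2)
        / (Fintype.card α * (Fintype.card α - 1) * (Fintype.card α - 2)) := by
  have := expect_powersetCard_ite_subset hn {i, j, k}
  rw [card_insert_of_notMem (by simp [hij, hik]), card_pair hjk,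
    Nat.cast_descFactorial_three, Nat.cast_descFactorial_three] at this
  rw [← this]
  refine expect_congr rfl fun S _ => ?_
  simp only [sampleIndicator, insert_subset_iff, singleton_subset_iff]
  split_ifs <;> simp_all

def pairKernel (n : ℕ) (i j : α) (S : Finset α) : ℝ :=
  (Fintype.card α - n - 1) * (X i S * X j S) + (n - 1) * ((1 - X i S) * (1 - X j S))

lemma uniformCov_pairKernel_sampleIndicator (hn : n ≤ Fintype.card α) {i j : α} (hij : i ≠ j)
    (k : α) : uniformCov (powersetCard n univ) (pairKernel n i j) (X k) = 0 := by
  have hP : (powersetCard n (univ : Finset α)).Nonempty := powersetCard_nonempty.2 (by simpa)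
  have hN2 : (2 : ℝ) ≤ Fintype.card α := by
    exact_mod_cast (card_pair hij).symm.trans_le (card_le_univ _)
  rw [uniformCov_eq_expect_mul_sub]
  simp only [pairKernel, show ∀ a b : ℝ, (1 - a) * (1 - b) = 1 - a - b + a * b by
    intros; ring, expect_add_distrib, expect_sub_distrib, ← mul_expect, expect_const hP,
    expect_sampleIndicator hn, expect_sampleIndicator_mul hn hij]
  by_cases hk : k = i ∨ k = j
  · have hprod : ∀ S, ((Fintype.card α - n - 1) * (X i S * X j S)
        + (n - 1) * (1 - X i S - X j S + X i S * X j S)) * X k S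
          = (Fintype.card α - n - 1) * (X i S * X j S) := by
      intro S
      rcases hk with rfl | rfl <;> unfold sampleIndicator <;> split_ifs <;> ring
    simp only [hprod, ← mul_expect, expect_sampleIndicator_mul hn hij]
    have : (Fintype.card α : ℝ) - 1 ≠ 0 := by linarith
    field_simp
    ring
  · push Not at hk
    have hN3 : (3 : ℝ) ≤ Fintype.card α := by
      have := card_le_univ {i, j, k}
      rw [card_insert_of_notMem (by simp [hij, hk.1.symm]), card_pair hk.2.symm] at this
      exact_mod_cast this
    simp only [add_mul, sub_mul, one_mul, mul_assoc, expect_add_distrib, expect_sub_distrib,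
      ← mul_expect, expect_sampleIndicator hn,
      expect_sampleIndicator_mul hn hk.1.symm, expect_sampleIndicator_mul hn hk.2.symm,
      expect_sampleIndicator_mul_mul hn hij hk.1.symm hk.2.symm]
    have : (Fintype.card α : ℝ) - 1 ≠ 0 := by linarith
    have : (Fintype.card α : ℝ) - 2 ≠ 0 := by linarith
    field_simp
    ring

lemma uniformCov_sum_pairKernel_sampleIndicator (hn : n ≤ Fintype.card α) (s : Finset (α × α))
    (hs : ∀ p ∈ s, p.1 ≠ p.2) (k : α) :
    uniformCov (powersetCard n univ) (fun S => ∑ p ∈ s, pairKernel n p.1 p.2 S) (X k) = 0 := by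
  rw [uniformCov_sum_left]
  exact sum_eq_zero fun p hp => uniformCov_pairKernel_sampleIndicator hn (hs p hp) k

omit [Fintype α] in
lemma sum_offDiag_mul_of_mul_self {z : α → ℝ} (hz : ∀ i, z i * z i = z i) (F : Finset α) :
    ∑ p ∈ F.offDiag, z p.1 * z p.2 = (∑ i ∈ F, z i) * (∑ i ∈ F, z i - 1) := by
  have hsq : (∑ i ∈ F, z i) * ∑ i ∈ F, z i
      = ∑ i ∈ F, z i + ∑ p ∈ F.offDiag, z p.1 * z p.2 := by
    rw [sum_mul_sum, ← sum_product', ← diag_union_offDiag, sum_union (disjoint_diag_offDiag F),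
      sum_diag]
    simp only [hz]
  linarith

omit [Fintype α] in
lemma sum_one_sub_sampleIndicator (F : Finset α) (S : Finset α) :
    ∑ i ∈ F, (1 - X i S) = #F - ∑ i ∈ F, X i S := by
  simp [sum_sub_distrib]

lemma sum_offDiag_pairKernel (F S : Finset α) :
    ∑ p ∈ F.offDiag, pairKernel n p.1 p.2 S
      = (Fintype.card α - n - 1) * ((∑ i ∈ F, X i S) * (∑ i ∈ F, X i S - 1))
        + (n - 1) * ((#F - ∑ i ∈ F, X i S) * (#F - ∑ i ∈ F, X i S - 1)) := by
  have hX : ∀ i, X i S * X i S = X i S := fun i => by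
    unfold sampleIndicator; split_ifs <;> norm_num
  have hY : ∀ i, (1 - X i S) * (1 - X i S) = 1 - X i S := fun i => by
    unfold sampleIndicator; split_ifs <;> norm_num
  simp only [pairKernel, sum_add_distrib, ← mul_sum, sum_offDiag_mul_of_mul_self hX,
    sum_offDiag_mul_of_mul_self hY, sum_one_sub_sampleIndicator]

lemma sum_product_pairKernel (F G S : Finset α) :
    ∑ p ∈ F ×ˢ G, pairKernel n p.1 p.2 S
      = (Fintype.card α - n - 1) * ((∑ i ∈ F, X i S) * ∑ j ∈ G, X j S)
        + (n - 1) * ((#F - ∑ i ∈ F, X i S) * (#G - ∑ j ∈ G, X j S)) := by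
  simp only [pairKernel, sum_add_distrib, ← mul_sum, sum_mul_sum, sum_product,
    ← sum_one_sub_sampleIndicator]

lemma card_filter_eq_sum_sampleIndicator (p : α → Prop) [DecidablePred p]
    (S : Finset α) : (#(S.filter p) : ℝ) = ∑ i ∈ univ.filter p, X i S := by
  simp only [sampleIndicator, sum_boole, filter_filter, Nat.cast_inj]
  congr 1
  ext i
  simp [and_comm]

end Sampling

section AveragingStatistic

variable {ι α β : Type*} [Fintype ι] (C : SimpleGraph ι) [Fintype C.edgeSet]

def averagingStat (m c : ι → ℝ) : ℝ :=
  ∑ u, c u * (c u - 1) / m u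
    + ∑ e ∈ C.edgeFinset,
        Sym2.lift ⟨fun u w => c u * c w / (m u * m w), fun u w => by ring⟩ e

variable {C}

lemma uniformCov_mul_averagingStat_add_mul_eq_zero {s : Finset β} (a b : ℝ) (m : ι → ℝ)
    (c c' : ι → β → ℝ) (g : β → ℝ)
    (hwithin : ∀ u, uniformCov s (fun x => a * (c u x * (c u x - 1))
      + b * (c' u x * (c' u x - 1))) g = 0)
    (hbetween : ∀ u w, C.Adj u w →
      uniformCov s (fun x => a * (c u x * c w x) + b * (c' u x * c' w x)) g = 0) :
    uniformCov s (fun x => a * averagingStat C m (c · x) + b * averagingStat C m (c' · x)) g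
      = 0 := by
  have hcombine : ∀ x, a * averagingStat C m (c · x) + b * averagingStat C m (c' · x)
      = ∑ u, (a * (c u x * (c u x - 1)) + b * (c' u x * (c' u x - 1))) / m u
        + ∑ e ∈ C.edgeFinset, Sym2.lift ⟨fun u w => (a * (c u x * c w x)
          + b * (c' u x * c' w x)) / (m u * m w), fun u w => by ring⟩ e := by
    intro x
    simp only [averagingStat, mul_add, mul_sum, add_add_add_comm, ← sum_add_distrib]
    refine congrArg₂ (· + ·) (sum_congr rfl fun u _ => by ring) (sum_congr rfl fun e _ => ?_)
    induction e using Sym2.ind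
    simp only [Sym2.lift_mk]
    ring
  simp only [hcombine]
  rw [uniformCov_add_left, uniformCov_sum_left, uniformCov_sum_left,
    sum_eq_zero fun u _ => by rw [uniformCov_div_left, hwithin, zero_div], zero_add]
  refine sum_eq_zero fun e he => ?_
  induction e using Sym2.ind with
  | _ u w =>
    simp only [Sym2.lift_mk]
    rw [uniformCov_div_left, hbetween u w (SimpleGraph.mem_edgeFinset.1 he), zero_div]

variable [DecidableEq ι] [Fintype α] [DecidableEq α] {n : ℕ}

local notation "X" => sampleIndicator

lemma uniformCov_weightedAveragingStat_sampleIndicator (hn : n ≤ Fintype.card α) (v : α → ι)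
    (m : ι → ℝ) (hm : ∀ u, m u = #(univ.filter (v · = u)))
    {c₁ c₂ : ι → Finset α → ℝ} (hc₁ : ∀ u S, c₁ u S = #(S.filter (v · = u)))
    (hc₂ : ∀ u S, c₂ u S = m u - c₁ u S) {R₁ R₂ : Finset α → ℝ}
    (hR₁ : ∀ S, R₁ S = averagingStat C m (c₁ · S))
    (hR₂ : ∀ S, R₂ S = averagingStat C m (c₂ · S))
    (k : α) :
    uniformCov (powersetCard n univ)
      (fun S => (Fintype.card α - n - 1) * R₁ S + (n - 1) * R₂ S) (X k) = 0 := by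
  simp only [hR₁, hR₂]
  apply uniformCov_mul_averagingStat_add_mul_eq_zero
  · intro u
    refine (uniformCov_congr_left (f' := fun S => ∑ p ∈ (univ.filter (v · = u)).offDiag,
      pairKernel n p.1 p.2 S) (fun S _ => ?_) _).trans ?_
    · rw [sum_offDiag_pairKernel, hc₂, hm, hc₁, card_filter_eq_sum_sampleIndicator]
    · exact uniformCov_sum_pairKernel_sampleIndicator hn _ (fun p hp => (mem_offDiag.1 hp).2.2) k
  · intro u w huw
    refine (uniformCov_congr_left (f' := fun S => ∑ p ∈ univ.filter (v · = u) ×ˢ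
      univ.filter (v · = w), pairKernel n p.1 p.2 S) (fun S _ => ?_) _).trans ?_
    · rw [sum_product_pairKernel, hc₂, hc₂, hm, hm, hc₁, hc₁,
        card_filter_eq_sum_sampleIndicator, card_filter_eq_sum_sampleIndicator]
    · refine uniformCov_sum_pairKernel_sampleIndicator hn _ (fun p hp heq => huw.ne ?_) k
      simp only [mem_product, mem_filter] at hp
      rw [← hp.1.2, ← hp.2.2, heq]

lemma uniformCov_averagingStat_sub_eq_zero {s : Finset (Finset α)} (v : α → ι) (m : ι → ℝ)
    {c₁ c₂ : ι → Finset α → ℝ} (hc₁ : ∀ u S, c₁ u S = #(S.filter (v · = u)))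
    (hc₂ : ∀ u S, c₂ u S = m u - c₁ u S) {R₁ R₂ : Finset α → ℝ}
    (hR₁ : ∀ S, R₁ S = averagingStat C m (c₁ · S))
    (hR₂ : ∀ S, R₂ S = averagingStat C m (c₂ · S))
    {g : Finset α → ℝ} (hg : ∀ k, uniformCov s (X k) g = 0) :
    uniformCov s (fun S => R₁ S - R₂ S) g = 0 := by
  simp only [hR₁, hR₂]
  have hcount : ∀ u, uniformCov s (c₁ u) g = 0 := fun u => by
    rw [uniformCov_congr_left (fun S _ => (hc₁ u S).trans
      (card_filter_eq_sum_sampleIndicator _ S)), uniformCov_sum_left]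
    exact sum_eq_zero fun k _ => hg k
  refine (uniformCov_congr_left (f' := fun S => 1 * averagingStat C m (c₁ · S)
    + (-1) * averagingStat C m (c₂ · S)) (fun S _ => by ring) g).trans ?_
  apply uniformCov_mul_averagingStat_add_mul_eq_zero
  · intro u
    refine (uniformCov_congr_left (f' := fun S => 2 * (m u - 1) * c₁ u S + -(m u * (m u - 1)))
      (fun S _ => by rw [hc₂]; ring) g).trans ?_
    rw [uniformCov_add_const_left, uniformCov_mul_left, hcount, mul_zero]
  · intro u w _
    refine (uniformCov_congr_left (f' := fun S => m w * c₁ u S + m u * c₁ w S + -(m u * m w))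
      (fun S _ => by rw [hc₂, hc₂]; ring) g).trans ?_
    rw [uniformCov_add_const_left, uniformCov_add_left, uniformCov_mul_left, uniformCov_mul_left,
      hcount, hcount, mul_zero, mul_zero, add_zero]

end AveragingStatistic

/-- **Theorem 1 of the paper.**  The extended weighted edge-count
statistic `R_{w,(a)}` (with weight `p̂ = (n₁−1)/(N−2)`) minimizes the variance among
all convex combinations `a·R_{1,(a)} + b·R_{2,(a)}` with `a, b > 0`, `a + b = 1`. -/
theorem extended_weighted_minimizes_variance
    -- number of distinct values and multiplicities
    (K : ℕ) (m : Fin K → ℕ)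
    -- total sample size
    (N : ℕ) (hNge : 4 ≤ N)
    -- value map with prescribed fiber sizes
    (v : Fin N → Fin K)
    (hv : ∀ u, (Finset.univ.filter (fun i => v i = u)).card = m u)
    -- similarity graph on the distinct values
    (C₀ : SimpleGraph (Fin K))
    -- sizes of sample 1 and sample 2
    (n₁ : ℕ) (hn₁' : n₁ ≤ N - 2)
    -- expectation under the permutation null distribution (uniform over
    -- all `n₁`-element subsets of `Fin N`)
    (E : (Finset (Fin N) → ℝ) → ℝ)
    (hE : ∀ f, E f =
      (∑ S ∈ Finset.powersetCard n₁ (Finset.univ : Finset (Fin N)), f S) / (N.choose n₁ : ℝ))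
    -- within-group counts
    (n1 : Fin K → Finset (Fin N) → ℝ)
    (hn1 : ∀ u S, n1 u S = ((S.filter (fun i => v i = u)).card : ℝ))
    (n2 : Fin K → Finset (Fin N) → ℝ)
    (hn2 : ∀ u S, n2 u S = (m u : ℝ) - n1 u S)
    -- the averaging statistics
    (R1a : Finset (Fin N) → ℝ)
    (hR1a : ∀ S, R1a S = ∑ u, n1 u S * (n1 u S - 1) / (m u : ℝ)
        + ∑ e ∈ C₀.edgeFinset,
            Sym2.lift ⟨fun u w => n1 u S * n1 w S / ((m u : ℝ) * (m w : ℝ)),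
              fun u w => by ring⟩ e)
    (R2a : Finset (Fin N) → ℝ)
    (hR2a : ∀ S, R2a S = ∑ u, n2 u S * (n2 u S - 1) / (m u : ℝ)
        + ∑ e ∈ C₀.edgeFinset,
            Sym2.lift ⟨fun u w => n2 u S * n2 w S / ((m u : ℝ) * (m w : ℝ)),
              fun u w => by ring⟩ e)
    -- variance under the permutation null distribution
    (Var : (Finset (Fin N) → ℝ) → ℝ)
    (hVar : ∀ f, Var f = E (fun S => (f S - E f) ^ 2))
    -- the weight p̂ and the extended weighted edge-count statistic
    (phat : ℝ) (hphat : phat = ((n₁ : ℝ) - 1) / ((N : ℝ) - 2))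
    (Rwa : Finset (Fin N) → ℝ)
    (hRwa : ∀ S, Rwa S = (1 - phat) * R1a S + phat * R2a S) :
    ∀ a b : ℝ, 0 < a → 0 < b → a + b = 1 →
      Var (fun S => a * R1a S + b * R2a S) ≥ Var Rwa := by
  intro a b _ _ hab
  have hn : n₁ ≤ Fintype.card (Fin N) := by rw [Fintype.card_fin]; omega
  obtain rfl : E = fun f => 𝔼 S ∈ powersetCard n₁ univ, f S := funext fun f => by
    rw [hE, expect_eq_sum_div_card, card_powersetCard, card_univ, Fintype.card_fin]
  obtain rfl : Var = fun f => uniformCov (powersetCard n₁ univ) f f := funext fun f => by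
    simp only [hVar, uniformCov, sq]
  have hQ := uniformCov_weightedAveragingStat_sampleIndicator hn v (fun u => m u)
    (fun u => by rw [hv]) hn1 hn2 hR1a hR2a
  rw [Fintype.card_fin] at hQ
  have hDQ := uniformCov_averagingStat_sub_eq_zero v (fun u => m u) hn1 hn2 hR1a hR2a
    fun k => (uniformCov_comm _ _).trans (hQ k)
  have hN2 : (N : ℝ) - 2 ≠ 0 := by
    have : (4 : ℝ) ≤ N := by exact_mod_cast hNge
    linarith
  have hRwQ : ∀ S, Rwa S = ((N : ℝ) - 2)⁻¹ * ((N - n₁ - 1) * R1a S + (n₁ - 1) * R2a S) :=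
    fun S => by rw [hRwa, hphat]; field_simp; ring
  have hcov : uniformCov (powersetCard n₁ univ) Rwa (fun S => R1a S - R2a S) = 0 := by
    rw [uniformCov_congr_left fun S _ => hRwQ S, uniformCov_mul_left, uniformCov_comm, hDQ,
      mul_zero]
  have hsplit : (fun S => a * R1a S + b * R2a S)
      = fun S => Rwa S + (a - 1 + phat) * (R1a S - R2a S) :=
    funext fun S => by rw [hRwa]; linear_combination R2a S * hab
  show uniformCov _ _ _ ≥ uniformCov _ _ _
  rw [hsplit, uniformCov_self_add_mul hcov]
  exact le_add_of_nonneg_right (mul_nonneg (sq_nonneg _) (uniformCov_self_nonneg _))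
end
end

section
/- For every subset S ⊆ Fin N (of arbitrary size), the number of edges of the union graph Ḡ with both endpoints in S equals ∑_u n_{1u}(n_{1u}−1)/2 + ∑_{{u,w} edge of C₀} n_{1u}·n_{1w}, where n_{1u} = |S ∩ v⁻¹(u)|; and the number of edges of Ḡ with both endpoints in the complement of S equals ∑_u n_{2u}(n_{2u}−1)/2 + ∑_{{u,w} edge of C₀} n_{2u}·n_{2w}, where n_{2u} = m(u) − n_{1u}. (Analytic expressions for R_{1,(u)} and R_{2,(u)} from Lemma 1 of the paper.) -/
open Finset
open scoped Classical

/-!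
Count ordered pairs instead of edges: each edge of `Ḡ` inside `S` is counted twice. An ordered
pair of adjacent observations in `S` either lies in one value class `u` (with distinct entries),
giving `n_{1u} (n_{1u} - 1)` pairs, or has entries in two classes `u ≠ w` adjacent in `C₀`,
giving `n_{1u} n_{1w}` pairs for each orientation of the edge `{u, w}`. Halving gives the formula
for `S`; the formula for the complement is the same count for `Sᶜ`, whose class sizes are
`m u - n_{1u}`.
-/

theorem Nat.two_mul_choose_two (n : ℕ) : 2 * n.choose 2 = n * (n - 1) := by
  rw [Nat.choose_two_right, Nat.mul_div_cancel' n.even_mul_pred_self.two_dvd]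

namespace SimpleGraph

variable {V M : Type*} [Fintype V] [DecidableEq V] [AddCommMonoid M]

theorem sum_dart_edge_eq_two_nsmul (G : SimpleGraph V) (f : Sym2 V → M) :
    ∑ d : G.Dart, f d.edge = 2 • ∑ e ∈ G.edgeFinset, f e := by
  rw [← sum_fiberwise_of_maps_to (g := Dart.edge) (t := G.edgeFinset)
    (fun d _ => G.mem_edgeFinset.2 d.edge_mem), smul_sum]
  refine sum_congr rfl fun e he => ?_
  rw [sum_congr rfl fun d hd => congrArg f (mem_filter.1 hd).2, sum_const,
    G.dart_edge_fiber_card e (G.mem_edgeFinset.1 he)]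

theorem sum_adj_eq_two_nsmul_sum_edgeFinset (G : SimpleGraph V) (f : Sym2 V → M) :
    ∑ p : V × V with G.Adj p.1 p.2, f s(p.1, p.2) = 2 • ∑ e ∈ G.edgeFinset, f e := by
  rw [← sum_dart_edge_eq_two_nsmul]
  exact sum_bij' (fun p hp => ⟨p, (mem_filter.1 hp).2⟩) (fun d _ => d.toProd)
    (by simp) (by simp) (by simp) (by simp) (by simp [Dart.edge])

theorem two_mul_card_edgeFinset_filter_forall_mem (G : SimpleGraph V) (T : Finset V) :
    2 * #{e ∈ G.edgeFinset | ∀ x ∈ e, x ∈ T} = #{p ∈ T ×ˢ T | G.Adj p.1 p.2} := by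
  have := G.sum_adj_eq_two_nsmul_sum_edgeFinset fun e => if ∀ x ∈ e, x ∈ T then 1 else 0
  simp only [sum_boole, smul_eq_mul, Nat.cast_id, filter_filter, Sym2.mem_iff] at this
  rw [← this]
  congr 1
  ext p
  simp only [mem_filter, mem_univ, mem_product, true_and, forall_eq_or_imp, forall_eq]
  exact and_comm

end SimpleGraph

section Counting

variable {V α : Type*} [DecidableEq α] [Fintype α]

theorem card_filter_ne_and_eq_comp [DecidableEq V] (v : V → α) (T : Finset V) :
    #{p ∈ T ×ˢ T | p.1 ≠ p.2 ∧ v p.1 = v p.2}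
      = ∑ u, #{i ∈ T | v i = u} * (#{i ∈ T | v i = u} - 1) := by
  rw [card_eq_sum_card_fiberwise (f := fun p => v p.1) (t := univ) (fun _ _ => mem_univ _)]
  refine sum_congr rfl fun u _ => ?_
  have hfiber : {p ∈ {p ∈ T ×ˢ T | p.1 ≠ p.2 ∧ v p.1 = v p.2} | v p.1 = u}
      = {i ∈ T | v i = u}.offDiag := by
    ext ⟨i, j⟩
    simp only [mem_filter, mem_product, mem_offDiag]
    constructor
    · rintro ⟨⟨⟨hi, hj⟩, hne, hv⟩, rfl⟩
      exact ⟨⟨hi, rfl⟩, ⟨hj, hv.symm⟩, hne⟩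
    · rintro ⟨⟨hi, rfl⟩, ⟨hj, hv⟩, hne⟩
      exact ⟨⟨⟨hi, hj⟩, hne, hv.symm⟩, rfl⟩
  rw [hfiber, offDiag_card, Nat.mul_sub_one]

theorem card_filter_rel_comp (v : V → α) (T : Finset V) (R : α → α → Prop) :
    #{p ∈ T ×ˢ T | R (v p.1) (v p.2)}
      = ∑ q : α × α with R q.1 q.2, #{i ∈ T | v i = q.1} * #{i ∈ T | v i = q.2} := by
  rw [card_eq_sum_card_fiberwise (f := fun p => (v p.1, v p.2)) (t := {q | R q.1 q.2})
    (fun p hp => by simpa using (mem_filter.1 hp).2)]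
  refine sum_congr rfl fun q hq => ?_
  have hfiber : {p ∈ {p ∈ T ×ˢ T | R (v p.1) (v p.2)} | (v p.1, v p.2) = q}
      = {i ∈ T | v i = q.1} ×ˢ {i ∈ T | v i = q.2} := by
    ext ⟨i, j⟩
    obtain ⟨u, w⟩ := q
    simp only [mem_filter, mem_product, Prod.mk.injEq, mem_univ, true_and] at hq ⊢
    constructor
    · rintro ⟨⟨⟨hi, hj⟩, -⟩, rfl, rfl⟩
      exact ⟨⟨hi, rfl⟩, hj, rfl⟩
    · rintro ⟨⟨hi, rfl⟩, hj, rfl⟩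
      exact ⟨⟨⟨hi, hj⟩, hq⟩, rfl, rfl⟩
  rw [hfiber, card_product]

theorem card_edgeFinset_filter_forall_mem_of_adj_iff [Fintype V] [DecidableEq V]
    {G : SimpleGraph V} {C : SimpleGraph α} {v : V → α}
    (hG : ∀ i j, G.Adj i j ↔ i ≠ j ∧ (v i = v j ∨ C.Adj (v i) (v j)))
    (T : Finset V) :
    #{e ∈ G.edgeFinset | ∀ x ∈ e, x ∈ T}
      = ∑ u, (#{i ∈ T | v i = u}).choose 2
        + ∑ e ∈ C.edgeFinset,
            Sym2.lift ⟨fun u w => #{i ∈ T | v i = u} * #{i ∈ T | v i = w},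
              fun u w => by ring⟩ e := by
  have hsplit : {p ∈ T ×ˢ T | G.Adj p.1 p.2}
      = {p ∈ T ×ˢ T | p.1 ≠ p.2 ∧ v p.1 = v p.2}
        ∪ {p ∈ T ×ˢ T | C.Adj (v p.1) (v p.2)} := by
    rw [← filter_or]
    refine filter_congr fun p _ => ?_
    rw [hG]
    constructor
    · rintro ⟨hne, hv | hC⟩
      exacts [Or.inl ⟨hne, hv⟩, Or.inr hC]
    · rintro (⟨hne, hv⟩ | hC)
      exacts [⟨hne, Or.inl hv⟩, ⟨fun h => hC.ne (congrArg v h), Or.inr hC⟩]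
  have hdisj : Disjoint {p ∈ T ×ˢ T | p.1 ≠ p.2 ∧ v p.1 = v p.2}
      {p ∈ T ×ˢ T | C.Adj (v p.1) (v p.2)} :=
    disjoint_filter.2 fun _ _ hv hC => hC.ne hv.2
  apply Nat.eq_of_mul_eq_mul_left two_pos
  rw [G.two_mul_card_edgeFinset_filter_forall_mem, hsplit, card_union_of_disjoint hdisj,
    card_filter_ne_and_eq_comp, card_filter_rel_comp, mul_add, mul_sum,
    ← smul_eq_mul 2 (∑ e ∈ _, _), ← C.sum_adj_eq_two_nsmul_sum_edgeFinset]
  simp only [Nat.two_mul_choose_two, Sym2.lift_mk]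

end Counting

theorem card_filter_compl {V : Type*} [Fintype V] [DecidableEq V] (S : Finset V) (p : V → Prop)
    [DecidablePred p] :
    #{i ∈ Sᶜ | p i} = #{i | p i} - #{i ∈ S | p i} := by
  rw [eq_tsub_iff_add_eq_of_le (card_le_card (filter_subset_filter _ (subset_univ S))), add_comm,
    ← card_union_of_disjoint (disjoint_filter_filter disjoint_compl_right), ← filter_union,
    union_compl]

/-- **Lemma 1 of the paper.**  Analytic expressions for the union
within-sample edge-counts: for every subset `S` of the observations, the number of
edges of the union graph `Ḡ` with both endpoints in `S` (resp. in the complement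
of `S`) is given by the stated closed-form expressions. -/
theorem union_edge_count_formula
    -- number of distinct values and multiplicities
    (K : ℕ) (m : Fin K → ℕ)
    -- total sample size
    (N : ℕ)
    -- value map with prescribed fiber sizes
    (v : Fin N → Fin K)
    (hv : ∀ u, (Finset.univ.filter (fun i => v i = u)).card = m u)
    -- similarity graph on the distinct values
    (C₀ : SimpleGraph (Fin K))
    -- the union graph Ḡ on the observations
    (Gbar : SimpleGraph (Fin N))
    (hGbar : ∀ i j, Gbar.Adj i j ↔ i ≠ j ∧ (v i = v j ∨ C₀.Adj (v i) (v j)))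
    -- an arbitrary subset of observations, and the within-group counts
    (S : Finset (Fin N))
    (n1 n2 : Fin K → ℕ)
    (hn1 : ∀ u, n1 u = (S.filter (fun i => v i = u)).card)
    (hn2 : ∀ u, n2 u = m u - n1 u) :
    (Gbar.edgeFinset.filter (fun e => ∀ x ∈ e, x ∈ S)).card
      = (∑ u, n1 u * (n1 u - 1) / 2)
        + ∑ e ∈ C₀.edgeFinset,
            Sym2.lift ⟨fun u w => n1 u * n1 w, fun u w => by ring⟩ e ∧
    (Gbar.edgeFinset.filter (fun e => ∀ x ∈ e, x ∉ S)).card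
      = (∑ u, n2 u * (n2 u - 1) / 2)
        + ∑ e ∈ C₀.edgeFinset,
            Sym2.lift ⟨fun u w => n2 u * n2 w, fun u w => by ring⟩ e := by
  have hn2_compl : ∀ u, n2 u = #{i ∈ Sᶜ | v i = u} := fun u => by
    rw [hn2, hn1, ← hv, card_filter_compl]
  obtain rfl : n1 = fun u => #{i ∈ S | v i = u} := funext hn1
  obtain rfl : n2 = fun u => #{i ∈ Sᶜ | v i = u} := funext hn2_compl
  simp only [← Nat.choose_two_right]
  -- `convert` reconciles two decidability instances of `∀ x ∈ e, x ∈ S` on `Fin N`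
  constructor
  · convert card_edgeFinset_filter_forall_mem_of_adj_iff hGbar S using 3
  · convert card_edgeFinset_filter_forall_mem_of_adj_iff hGbar Sᶜ using 4
    simp only [mem_compl]
end

section
/- Assume N ≥ 4. Under the permutation null distribution, E(R_{w,(u)}) = |Ḡ| · (n₁−1)(n₂−1)/((N−1)(N−2)), and Var(R_{w,(u)}) = [n₁(n₁−1)n₂(n₂−1)/(N(N−1)(N−2)(N−3))] · ( |Ḡ| − (1/(N−2)) ∑_{i ∈ Fin N} deg_{Ḡ}(i)² + 2|Ḡ|²/((N−1)(N−2)) ). -/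
/-!
Write `(N - 2) R_w(S) = ∑ₑ X_e(S)`, where for an edge `e` of `Ḡ`,
`X_e(S) = (n₂ - 1) [e ⊆ S] + (n₁ - 1) [e ⊆ Sᶜ]`. For a uniformly random `n₁`-subset `S`, the
probability that a fixed `a`-set lies in `S` while a disjoint `b`-set avoids it is the ratio of
falling factorials `n₁^(a) n₂^(b) / N^(a+b)`. Hence `E[X_e X_f]` depends only on the number
`k ∈ {0, 1, 2}` of endpoints shared by `e` and `f`, and summing over pairs of edges only needs the
pair counts: `k = 2` exactly on the diagonal, and `∑_{e,f} |e ∩ f| = ∑ᵢ deg(i)²`.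
The variance is then `E[R_w²] - E[R_w]²`, and the closed form is algebra.
-/

open Finset MeasureTheory
open scoped BigOperators Classical

noncomputable section

open scoped Nat

theorem Nat.choose_sub_sub_mul_descFactorial {N n a b : ℕ} (ha : a ≤ n) (hn : n ≤ N) :
    (N - b - a).choose (n - a) * N.descFactorial (a + b) =
      N.choose n * n.descFactorial a * (N - n).descFactorial b := by
  by_cases hb : b ≤ N - n
  · refine Nat.eq_of_mul_eq_mul_right
      (Nat.mul_pos (n - a).factorial_pos (N - n - b).factorial_pos) ?_
    have hchoose := Nat.choose_mul_factorial_mul_factorial (n := N - b - a) (k := n - a) (by omega)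
    rw [show N - b - a - (n - a) = N - n - b by omega] at hchoose
    have hdesc := Nat.factorial_mul_descFactorial (n := N) (k := a + b) (by omega)
    rw [show N - (a + b) = N - b - a by omega] at hdesc
    calc _ = (N - b - a).choose (n - a) * (n - a)! * (N - n - b)! * N.descFactorial (a + b) := by
          ring
      _ = N.choose n * n ! * (N - n)! := by
          rw [hchoose, hdesc, Nat.choose_mul_factorial_mul_factorial hn]
      _ = N.choose n * ((n - a)! * n.descFactorial a) *
            ((N - n - b)! * (N - n).descFactorial b) := by
          rw [Nat.factorial_mul_descFactorial ha, Nat.factorial_mul_descFactorial hb]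
      _ = _ := by ring
  · rw [Nat.descFactorial_eq_zero_iff_lt.2 (by omega : N - n < b), mul_zero]
    rcases Nat.lt_or_ge N (a + b) with h | h
    · rw [Nat.descFactorial_eq_zero_iff_lt.2 h, mul_zero]
    · rw [Nat.choose_eq_zero_of_lt (by omega), zero_mul]

namespace Finset

theorem card_filter_powersetCard_univ_subset_disjoint {α : Type*} [Fintype α] [DecidableEq α]
    {A B : Finset α} (hAB : Disjoint A B) {n : ℕ} (hA : #A ≤ n) :
    #{S ∈ powersetCard n (univ : Finset α) | A ⊆ S ∧ Disjoint B S} =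
      (Fintype.card α - #B - #A).choose (n - #A) := by
  have hfilter : {S ∈ powersetCard n (univ : Finset α) | A ⊆ S ∧ Disjoint B S} =
      {S ∈ powersetCard n Bᶜ | A ⊆ S} := by
    ext S
    simp only [mem_filter, mem_powersetCard, subset_univ, true_and, subset_compl_iff_disjoint_left]
    tauto
  rw [hfilter, card_filter_powersetCard_subset _ _ _ (subset_compl_iff_disjoint_left.2 hAB.symm) hA,
    Finset.card_compl]

theorem sum_sub_average_sq_div_card {ι : Type*} (s : Finset ι) (f : ι → ℝ) :
    (∑ i ∈ s, (f i - (∑ j ∈ s, f j) / #s) ^ 2) / #s =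
      (∑ i ∈ s, f i ^ 2) / #s - ((∑ i ∈ s, f i) / #s) ^ 2 := by
  rcases eq_or_ne (#s : ℝ) 0 with hs | hs
  · simp [hs]
  simp only [sub_sq, sum_add_distrib, sum_sub_distrib, ← sum_mul, ← mul_sum, sum_const,
    nsmul_eq_mul]
  field_simp
  ring

end Finset

def inclusionProb (N n a b : ℕ) : ℝ :=
  n.descFactorial a * (N - n).descFactorial b / N.descFactorial (a + b)

theorem inclusionProb_eq_descPochhammer {N n : ℕ} (hn : n ≤ N) (a b : ℕ) :
    inclusionProb N n a b = (descPochhammer ℝ a).eval (n : ℝ) *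
      (descPochhammer ℝ b).eval ((N : ℝ) - n) / (descPochhammer ℝ (a + b)).eval (N : ℝ) := by
  rw [inclusionProb, ← Nat.cast_sub hn]
  simp only [descPochhammer_eval_eq_descFactorial]

def edgePairMoment (N n : ℕ) (a b : ℝ) (k : ℕ) : ℝ :=
  a ^ 2 * inclusionProb N n (4 - k) 0 + b ^ 2 * inclusionProb N n 0 (4 - k) +
    if k = 0 then 2 * a * b * inclusionProb N n 2 2 else 0

def sameSideWeight {α : Type*} [DecidableEq α] (a b : ℝ) (S A : Finset α) : ℝ :=
  a * (if A ⊆ S then 1 else 0) + b * (if Disjoint A S then 1 else 0)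

section PowersetCard

variable {α : Type*} [Fintype α] [DecidableEq α] {n : ℕ}

theorem sum_powersetCard_indicator_subset_disjoint {A B : Finset α} (hAB : Disjoint A B)
    (hn : n ≤ Fintype.card α) :
    ∑ S ∈ powersetCard n (univ : Finset α), (if A ⊆ S ∧ Disjoint B S then 1 else 0 : ℝ) =
      (Fintype.card α).choose n * inclusionProb (Fintype.card α) n #A #B := by
  rw [sum_boole, inclusionProb, mul_div_assoc']
  by_cases hA : #A ≤ n
  · have hAB_le : #A + #B ≤ Fintype.card α := by
      rw [← card_union_of_disjoint hAB]; exact card_le_univ _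
    rw [eq_div_iff (by simpa [Nat.descFactorial_eq_zero_iff_lt] using hAB_le), ← mul_assoc]
    exact_mod_cast (card_filter_powersetCard_univ_subset_disjoint hAB hA) ▸
      Nat.choose_sub_sub_mul_descFactorial hA hn
  · have hempty : {S ∈ powersetCard n (univ : Finset α) | A ⊆ S ∧ Disjoint B S} = ∅ :=
      filter_eq_empty_iff.2 fun S hS ⟨hAS, _⟩ =>
        hA ((card_le_card hAS).trans (mem_powersetCard.1 hS).2.le)
    rw [hempty, Nat.descFactorial_eq_zero_iff_lt.2 (not_le.1 hA)]
    simp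

theorem sum_powersetCard_indicator_subset (hn : n ≤ Fintype.card α) (A : Finset α) :
    ∑ S ∈ powersetCard n (univ : Finset α), (if A ⊆ S then 1 else 0 : ℝ) =
      (Fintype.card α).choose n * inclusionProb (Fintype.card α) n #A 0 := by
  simpa using sum_powersetCard_indicator_subset_disjoint (disjoint_empty_right A) hn

theorem sum_powersetCard_indicator_disjoint (hn : n ≤ Fintype.card α) (A : Finset α) :
    ∑ S ∈ powersetCard n (univ : Finset α), (if Disjoint A S then 1 else 0 : ℝ) =
      (Fintype.card α).choose n * inclusionProb (Fintype.card α) n 0 #A := by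
  simpa using sum_powersetCard_indicator_subset_disjoint (disjoint_empty_left A) hn

omit [Fintype α] in
theorem sameSideWeight_mul_sameSideWeight (a b : ℝ) (S A B : Finset α) :
    sameSideWeight a b S A * sameSideWeight a b S B =
      a ^ 2 * (if A ∪ B ⊆ S then 1 else 0) + b ^ 2 * (if Disjoint (A ∪ B) S then 1 else 0) +
      a * b * ((if A ⊆ S ∧ Disjoint B S then 1 else 0) +
        (if B ⊆ S ∧ Disjoint A S then 1 else 0)) := by
  simp only [sameSideWeight, union_subset_iff, disjoint_union_left]
  split_ifs <;> simp_all <;> ring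

theorem sum_powersetCard_sameSideWeight (hn : n ≤ Fintype.card α) (a b : ℝ) (A : Finset α) :
    ∑ S ∈ powersetCard n (univ : Finset α), sameSideWeight a b S A =
      (Fintype.card α).choose n *
        (a * inclusionProb (Fintype.card α) n #A 0 + b * inclusionProb (Fintype.card α) n 0 #A) := by
  simp only [sameSideWeight, sum_add_distrib, ← mul_sum, sum_powersetCard_indicator_subset hn,
    sum_powersetCard_indicator_disjoint hn]
  ring

theorem sum_powersetCard_sameSideWeight_mul_sameSideWeight (hn : n ≤ Fintype.card α) (a b : ℝ)
    {A B : Finset α} (hA : #A = 2) (hB : #B = 2) :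
    ∑ S ∈ powersetCard n (univ : Finset α), sameSideWeight a b S A * sameSideWeight a b S B =
      (Fintype.card α).choose n * edgePairMoment (Fintype.card α) n a b #(A ∩ B) := by
  have hunion : #(A ∪ B) = 4 - #(A ∩ B) := by
    have := card_union_add_card_inter A B
    omega
  simp only [sameSideWeight_mul_sameSideWeight, sum_add_distrib, ← mul_sum,
    sum_powersetCard_indicator_subset hn, sum_powersetCard_indicator_disjoint hn, hunion,
    edgePairMoment]
  by_cases hAB : Disjoint A B
  · rw [sum_powersetCard_indicator_subset_disjoint hAB hn,
      sum_powersetCard_indicator_subset_disjoint hAB.symm hn, hA, hB,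
      if_pos (card_eq_zero.2 (disjoint_iff_inter_eq_empty.1 hAB))]
    ring
  · have hcross : ∀ A B : Finset α, ¬ Disjoint A B →
        ∑ S ∈ powersetCard n (univ : Finset α), (if A ⊆ S ∧ Disjoint B S then 1 else 0 : ℝ) = 0 :=
      fun A B h => sum_eq_zero fun S _ => if_neg fun ⟨hAS, hBS⟩ =>
        h (hBS.symm.mono_left hAS)
    rw [hcross A B hAB, hcross B A (fun h => hAB h.symm),
      if_neg (fun h => hAB (disjoint_iff_inter_eq_empty.2 (card_eq_zero.1 h)))]
    ring

end PowersetCard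

namespace SimpleGraph

variable {V : Type*} [Fintype V] [DecidableEq V] (G : SimpleGraph V) [Fintype G.edgeSet]

omit [Fintype V] in
theorem card_toFinset_of_mem_edgeFinset {e : Sym2 V} (he : e ∈ G.edgeFinset) :
    #e.toFinset = 2 :=
  Sym2.card_toFinset_of_not_isDiag e (G.not_isDiag_of_mem_edgeSet (mem_edgeFinset.1 he))

omit [Fintype V] in
theorem card_toFinset_inter_eq_two_iff {e f : Sym2 V} (he : e ∈ G.edgeFinset)
    (hf : f ∈ G.edgeFinset) : #(e.toFinset ∩ f.toFinset) = 2 ↔ e = f := by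
  refine ⟨fun h => ?_, fun h => by rw [h, inter_self, G.card_toFinset_of_mem_edgeFinset hf]⟩
  have hce := G.card_toFinset_of_mem_edgeFinset he
  have hcf := G.card_toFinset_of_mem_edgeFinset hf
  have hef : e.toFinset = f.toFinset :=
    (eq_of_subset_of_card_le inter_subset_left (by omega)).symm.trans
      (eq_of_subset_of_card_le inter_subset_right (by omega))
  ext x
  rw [← Sym2.mem_toFinset, hef, Sym2.mem_toFinset]

omit [Fintype V] in
theorem degree_eq_card_filter_edgeFinset_mem (i : V) [Fintype (G.neighborSet i)] :
    G.degree i = #{e ∈ G.edgeFinset | i ∈ e} := by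
  rw [← card_incidenceFinset_eq_degree, incidenceFinset_eq_filter]

theorem sum_sum_card_toFinset_inter_edgeFinset [DecidableRel G.Adj] :
    ∑ e ∈ G.edgeFinset, ∑ f ∈ G.edgeFinset, #(e.toFinset ∩ f.toFinset) =
      ∑ i, G.degree i ^ 2 := by
  have hinter : ∀ e f : Sym2 V, #(e.toFinset ∩ f.toFinset) =
      ∑ i, (if i ∈ e then 1 else 0) * (if i ∈ f then 1 else 0) := by
    intro e f
    rw [show e.toFinset ∩ f.toFinset = ({i | i ∈ e ∧ i ∈ f} : Finset V) by ext; simp,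
      card_filter]
    simp only [ite_zero_mul_ite_zero, mul_one]
  simp only [hinter, degree_eq_card_filter_edgeFinset_mem, card_filter, sq, sum_mul_sum]
  rw [sum_congr rfl fun e _ => sum_comm, sum_comm]

theorem sum_sum_apply_card_toFinset_inter_edgeFinset [DecidableRel G.Adj] (F : ℕ → ℝ) :
    ∑ e ∈ G.edgeFinset, ∑ f ∈ G.edgeFinset, F #(e.toFinset ∩ f.toFinset) =
      #G.edgeFinset ^ 2 * F 0 + (F 1 - F 0) * ∑ i, (G.degree i : ℝ) ^ 2 +
        #G.edgeFinset * (F 2 - 2 * F 1 + F 0) := by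
  -- On `k ∈ {0, 1, 2}`, `F k` is its interpolation through the values at `0` and `1`,
  -- corrected at `k = 2`, i.e. on the diagonal `e = f`.
  have hF : ∀ e ∈ G.edgeFinset, ∀ f ∈ G.edgeFinset, F #(e.toFinset ∩ f.toFinset) =
      F 0 + (F 1 - F 0) * #(e.toFinset ∩ f.toFinset) +
        if e = f then F 2 - 2 * F 1 + F 0 else 0 := by
    intro e he f hf
    have hle : #(e.toFinset ∩ f.toFinset) ≤ 2 :=
      (card_le_card inter_subset_left).trans (G.card_toFinset_of_mem_edgeFinset he).le
    simp only [← G.card_toFinset_inter_eq_two_iff he hf]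
    generalize #(e.toFinset ∩ f.toFinset) = k at hle ⊢
    interval_cases k <;> norm_num <;> ring
  have hdeg : ∑ e ∈ G.edgeFinset, ∑ f ∈ G.edgeFinset, (#(e.toFinset ∩ f.toFinset) : ℝ) =
      ∑ i, (G.degree i : ℝ) ^ 2 := by
    exact_mod_cast G.sum_sum_card_toFinset_inter_edgeFinset
  rw [sum_congr rfl fun e he => sum_congr rfl fun f hf => hF e he f hf]
  simp only [sum_add_distrib, sum_const, ← mul_sum, hdeg, sum_ite_eq, sum_ite_mem, inter_self,
    nsmul_eq_mul]
  ring

theorem sum_sameSideWeight_toFinset_edgeFinset (a b : ℝ) (S : Finset V) :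
    ∑ e ∈ G.edgeFinset, sameSideWeight a b S e.toFinset =
      a * #{e ∈ G.edgeFinset | ∀ x ∈ e, x ∈ S} + b * #{e ∈ G.edgeFinset | ∀ x ∈ e, x ∉ S} := by
  simp only [sameSideWeight, sum_add_distrib, ← mul_sum, sum_boole, subset_iff,
    Finset.disjoint_left, Sym2.mem_toFinset]

variable {n : ℕ}

theorem sum_powersetCard_sum_sameSideWeight (hn : n ≤ Fintype.card V) (a b : ℝ) :
    ∑ S ∈ powersetCard n (univ : Finset V), ∑ e ∈ G.edgeFinset, sameSideWeight a b S e.toFinset =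
      (Fintype.card V).choose n * (#G.edgeFinset *
        (a * inclusionProb (Fintype.card V) n 2 0 + b * inclusionProb (Fintype.card V) n 0 2)) := by
  rw [sum_comm, sum_congr rfl fun e he => by
    rw [sum_powersetCard_sameSideWeight hn, G.card_toFinset_of_mem_edgeFinset he], sum_const,
    nsmul_eq_mul]
  ring

theorem sum_powersetCard_sq_sum_sameSideWeight [DecidableRel G.Adj] (hn : n ≤ Fintype.card V)
    (a b : ℝ) :
    ∑ S ∈ powersetCard n (univ : Finset V),
        (∑ e ∈ G.edgeFinset, sameSideWeight a b S e.toFinset) ^ 2 =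
      (Fintype.card V).choose n *
        (#G.edgeFinset ^ 2 * edgePairMoment (Fintype.card V) n a b 0 +
          (edgePairMoment (Fintype.card V) n a b 1 - edgePairMoment (Fintype.card V) n a b 0) *
            ∑ i, (G.degree i : ℝ) ^ 2 +
          #G.edgeFinset * (edgePairMoment (Fintype.card V) n a b 2 -
            2 * edgePairMoment (Fintype.card V) n a b 1 +
              edgePairMoment (Fintype.card V) n a b 0)) := by
  calc _ = ∑ e ∈ G.edgeFinset, ∑ f ∈ G.edgeFinset, ∑ S ∈ powersetCard n (univ : Finset V),
        sameSideWeight a b S e.toFinset * sameSideWeight a b S f.toFinset := by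
        simp only [sq, sum_mul_sum]
        rw [sum_comm, sum_congr rfl fun e _ => sum_comm]
    _ = ∑ e ∈ G.edgeFinset, ∑ f ∈ G.edgeFinset, (Fintype.card V).choose n *
        edgePairMoment (Fintype.card V) n a b #(e.toFinset ∩ f.toFinset) :=
      sum_congr rfl fun e he => sum_congr rfl fun f hf =>
        sum_powersetCard_sameSideWeight_mul_sameSideWeight hn a b
          (G.card_toFinset_of_mem_edgeFinset he) (G.card_toFinset_of_mem_edgeFinset hf)
    _ = _ := by simp only [← mul_sum, G.sum_sum_apply_card_toFinset_inter_edgeFinset]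

end SimpleGraph

theorem mean_variance_Rwu_general
    -- total sample size
    (N : ℕ) (hNge : 4 ≤ N)
    -- sizes of sample 1 and sample 2
    (n₁ n₂ : ℕ) (hn₁' : n₁ ≤ N - 1) (hn₂ : n₂ = N - n₁)
    -- expectation under the permutation null distribution (uniform over
    -- all `n₁`-element subsets of `Fin N`)
    (E : (Finset (Fin N) → ℝ) → ℝ)
    (hE : ∀ f, E f =
      (∑ S ∈ Finset.powersetCard n₁ (Finset.univ : Finset (Fin N)), f S) / (N.choose n₁ : ℝ))
    -- the union graph Ḡ on the observations
    (Gbar : SimpleGraph (Fin N))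
    -- the union statistics: edge-counts within sample 1 and within sample 2
    (R1u : Finset (Fin N) → ℝ)
    (hR1u : ∀ S, R1u S =
      ((Gbar.edgeFinset.filter (fun e => ∀ x ∈ e, x ∈ S)).card : ℝ))
    (R2u : Finset (Fin N) → ℝ)
    (hR2u : ∀ S, R2u S =
      ((Gbar.edgeFinset.filter (fun e => ∀ x ∈ e, x ∉ S)).card : ℝ))
    -- variance under the permutation null distribution
    (Var : (Finset (Fin N) → ℝ) → ℝ)
    (hVar : ∀ f, Var f = E (fun S => (f S - E f) ^ 2))
    -- the weighted edge-count statistic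
    (Rwu : Finset (Fin N) → ℝ)
    (hRwu : ∀ S, Rwu S =
      (((n₂ : ℝ) - 1) * R1u S + ((n₁ : ℝ) - 1) * R2u S) / ((N : ℝ) - 2))
    :
    E Rwu = (Gbar.edgeFinset.card : ℝ) *
        (((n₁ : ℝ) - 1) * ((n₂ : ℝ) - 1)) / (((N : ℝ) - 1) * ((N : ℝ) - 2)) ∧
    Var Rwu = ((n₁ : ℝ) * ((n₁ : ℝ) - 1) * (n₂ : ℝ) * ((n₂ : ℝ) - 1)) /
        ((N : ℝ) * ((N : ℝ) - 1) * ((N : ℝ) - 2) * ((N : ℝ) - 3)) *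
      ( (Gbar.edgeFinset.card : ℝ)
        - (1 / ((N : ℝ) - 2)) * (∑ i, (Gbar.degree i : ℝ) ^ 2)
        + 2 * (Gbar.edgeFinset.card : ℝ) ^ 2 / (((N : ℝ) - 1) * ((N : ℝ) - 2)) ) := by
  have hnN : n₁ ≤ N := by omega
  have hn : n₁ ≤ Fintype.card (Fin N) := by rwa [Fintype.card_fin]
  have hchoose : (N.choose n₁ : ℝ) = #(powersetCard n₁ (univ : Finset (Fin N))) := by simp
  have hRw : Rwu = fun S => (∑ e ∈ Gbar.edgeFinset,
      sameSideWeight ((n₂ : ℝ) - 1) ((n₁ : ℝ) - 1) S e.toFinset) / ((N : ℝ) - 2) := by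
    ext S; rw [hRwu, hR1u, hR2u, Gbar.sum_sameSideWeight_toFinset_edgeFinset]; congr!
  have hsum := Gbar.sum_powersetCard_sum_sameSideWeight hn ((n₂ : ℝ) - 1) ((n₁ : ℝ) - 1)
  have hsq := Gbar.sum_powersetCard_sq_sum_sameSideWeight hn ((n₂ : ℝ) - 1) ((n₁ : ℝ) - 1)
  rw [hVar, hE, hE, hchoose, sum_sub_average_sq_div_card, ← hchoose, hRw]
  simp only [← sum_div, div_pow, hsum, hsq]
  have hn₂' : (n₂ : ℝ) = N - n₁ := by rw [hn₂, Nat.cast_sub hnN]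
  have hC : (N.choose n₁ : ℝ) ≠ 0 := by exact_mod_cast (Nat.choose_pos hnN).ne'
  have hN : (4 : ℝ) ≤ N := by exact_mod_cast hNge
  obtain ⟨hN0, hN1, hN2, hN3⟩ :
      (N : ℝ) ≠ 0 ∧ (N : ℝ) - 1 ≠ 0 ∧ (N : ℝ) - 2 ≠ 0 ∧ (N : ℝ) - 3 ≠ 0 := by
    refine ⟨?_, ?_, ?_, ?_⟩ <;> linarith
  simp only [Fintype.card_fin, edgePairMoment, inclusionProb_eq_descPochhammer hnN,
    descPochhammer_eval_eq_prod_range, prod_range_succ, prod_range_zero, hn₂']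
  norm_num
  constructor <;> field_simp <;> ring

/-- Mean and variance of the extended weighted edge-count
statistic `R_{w,(u)}` under the permutation null distribution. -/
theorem mean_variance_Rwu
    -- number of distinct values and multiplicities
    (K : ℕ) (hK : 1 ≤ K) (m : Fin K → ℕ) (hm : ∀ u, 1 ≤ m u)
    -- total sample size
    (N : ℕ) (hN : N = ∑ u, m u) (hNge : 4 ≤ N)
    -- value map with prescribed fiber sizes
    (v : Fin N → Fin K)
    (hv : ∀ u, (Finset.univ.filter (fun i => v i = u)).card = m u)
    -- similarity graph on the distinct values
    (C₀ : SimpleGraph (Fin K))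
    -- sizes of sample 1 and sample 2
    (n₁ n₂ : ℕ) (hn₁ : 1 ≤ n₁) (hn₁' : n₁ ≤ N - 1) (hn₂ : n₂ = N - n₁)
    -- expectation under the permutation null distribution (uniform over
    -- all `n₁`-element subsets of `Fin N`)
    (E : (Finset (Fin N) → ℝ) → ℝ)
    (hE : ∀ f, E f =
      (∑ S ∈ Finset.powersetCard n₁ (Finset.univ : Finset (Fin N)), f S) / (N.choose n₁ : ℝ))
    -- the union graph Ḡ on the observations
    (Gbar : SimpleGraph (Fin N))
    (hGbar : ∀ i j, Gbar.Adj i j ↔ i ≠ j ∧ (v i = v j ∨ C₀.Adj (v i) (v j)))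
    -- the union statistics: edge-counts within sample 1 and within sample 2
    (R1u : Finset (Fin N) → ℝ)
    (hR1u : ∀ S, R1u S =
      ((Gbar.edgeFinset.filter (fun e => ∀ x ∈ e, x ∈ S)).card : ℝ))
    (R2u : Finset (Fin N) → ℝ)
    (hR2u : ∀ S, R2u S =
      ((Gbar.edgeFinset.filter (fun e => ∀ x ∈ e, x ∉ S)).card : ℝ))
    -- variance under the permutation null distribution
    (Var : (Finset (Fin N) → ℝ) → ℝ)
    (hVar : ∀ f, Var f = E (fun S => (f S - E f) ^ 2))
    -- the weighted edge-count statistic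
    (Rwu : Finset (Fin N) → ℝ)
    (hRwu : ∀ S, Rwu S =
      (((n₂ : ℝ) - 1) * R1u S + ((n₁ : ℝ) - 1) * R2u S) / ((N : ℝ) - 2))
    :
    E Rwu = (Gbar.edgeFinset.card : ℝ) *
        (((n₁ : ℝ) - 1) * ((n₂ : ℝ) - 1)) / (((N : ℝ) - 1) * ((N : ℝ) - 2)) ∧
    Var Rwu = ((n₁ : ℝ) * ((n₁ : ℝ) - 1) * (n₂ : ℝ) * ((n₂ : ℝ) - 1)) /
        ((N : ℝ) * ((N : ℝ) - 1) * ((N : ℝ) - 2) * ((N : ℝ) - 3)) *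
      ( (Gbar.edgeFinset.card : ℝ)
        - (1 / ((N : ℝ) - 2)) * (∑ i, (Gbar.degree i : ℝ) ^ 2)
        + 2 * (Gbar.edgeFinset.card : ℝ) ^ 2 / (((N : ℝ) - 1) * ((N : ℝ) - 2)) ) :=
  mean_variance_Rwu_general N hNge n₁ n₂ hn₁' hn₂ E hE Gbar R1u hR1u R2u hR2u Var hVar Rwu hRwu
end
end

section
/- Assume N ≥ 2. Under the permutation null distribution, E(R_{d,(a)}) = (N − K + |C₀|)(n₁ − n₂)/N, and Var(R_{d,(a)}) = (4n₁n₂/(N(N−1))) · ( ∑_u (deg_{C₀}(u) − 2)²/(4m(u)) − (|C₀| − K)²/N ). -/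
open Finset
open scoped Classical

noncomputable section

/-!
Substituting `n_{2u} = m(u) - n_{1u}`, the quadratic terms of `R_{1,(a)} - R_{2,(a)}` cancel: up to an
additive constant it is `∑_u w_u n_{1u} = ∑_{i ∈ S} w_{v(i)}` with `w_u = 2 + (deg u - 2) / m(u)`.
A linear statistic `∑_{i ∈ S} b_i` of a uniform `k`-subset of an `n`-set has mean `k/n ∑ b_i` and
variance `k(n-k)/(n(n-1)) (∑ b_i² - (∑ b_i)²/n)`, because exactly `C(n,k) k/n` of the `k`-subsets
contain a given point and `C(n,k) k(k-1)/(n(n-1))` contain two given points. Summing `w` against the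
multiplicities with the handshake lemma turns these into the stated formulas.
-/

namespace Finset

variable {α : Type*} [DecidableEq α] (s : Finset α) (k : ℕ)

theorem card_filter_superset_powersetCard_mul_choose {t : Finset α} (ht : t ⊆ s) :
    #{S ∈ s.powersetCard k | t ⊆ S} * (#s).choose #t = (#s).choose k * k.choose #t := by
  rcases le_or_gt #t k with htk | hkt
  · rw [card_filter_powersetCard_subset t s k ht htk, Nat.choose_mul htk, mul_comm]
  · have hempty : {S ∈ s.powersetCard k | t ⊆ S} = ∅ :=
      filter_eq_empty_iff.2 fun S hS htS =>
        (card_le_card htS).not_gt ((mem_powersetCard.1 hS).2 ▸ hkt)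
    simp [hempty, Nat.choose_eq_zero_of_lt hkt]

theorem cast_card_filter_mem_powersetCard {i : α} (hi : i ∈ s) :
    (#{S ∈ s.powersetCard k | i ∈ S} : ℝ) = (#s).choose k * k / #s := by
  have hcount := card_filter_superset_powersetCard_mul_choose s k (singleton_subset_iff.2 hi)
  simp only [singleton_subset_iff, card_singleton, Nat.choose_one_right] at hcount
  have hs : (#s : ℝ) ≠ 0 := Nat.cast_ne_zero.2 (card_ne_zero_of_mem hi)
  rw [eq_div_iff hs]
  exact_mod_cast hcount

theorem cast_card_filter_mem_and_mem_powersetCard {i j : α} (hi : i ∈ s) (hj : j ∈ s)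
    (hij : i ≠ j) :
    (#{S ∈ s.powersetCard k | i ∈ S ∧ j ∈ S} : ℝ)
      = (#s).choose k * (k * (k - 1)) / (#s * (#s - 1)) := by
  have hpair : #{i, j} = 2 := card_pair hij
  have hcount := card_filter_superset_powersetCard_mul_choose s k (insert_subset hi
    (singleton_subset_iff.2 hj))
  simp only [insert_subset_iff, singleton_subset_iff, hpair] at hcount
  have hcount' := congrArg (Nat.cast : ℕ → ℝ) hcount
  push_cast [Nat.cast_choose_two] at hcount'
  have hs : 1 < #s := one_lt_card_iff.2 ⟨i, j, hi, hj, hij⟩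
  have hs₀ : (#s : ℝ) ≠ 0 := by positivity
  have hs₁ : (#s : ℝ) - 1 ≠ 0 := sub_ne_zero.2 (by exact_mod_cast hs.ne')
  rw [eq_div_iff (mul_ne_zero hs₀ hs₁)]
  linear_combination 2 * hcount'

theorem sum_sum_eq_sum_sum_filter_mem {β : Type*} [AddCommMonoid β] {𝒜 : Finset (Finset α)}
    (h𝒜 : ∀ S ∈ 𝒜, S ⊆ s) (F : Finset α → α → β) :
    ∑ S ∈ 𝒜, ∑ i ∈ S, F S i = ∑ i ∈ s, ∑ S ∈ 𝒜 with i ∈ S, F S i :=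
  sum_comm' fun S i => by
    simp only [mem_filter]
    exact ⟨fun h => ⟨h, h𝒜 S h.1 h.2⟩, And.left⟩

theorem sum_powersetCard_sum (b : α → ℝ) :
    ∑ S ∈ s.powersetCard k, ∑ i ∈ S, b i = (#s).choose k * (k / #s) * ∑ i ∈ s, b i := by
  rw [sum_sum_eq_sum_sum_filter_mem s fun S hS => (mem_powersetCard.1 hS).1, mul_sum]
  refine sum_congr rfl fun i hi => ?_
  rw [sum_const, nsmul_eq_mul, cast_card_filter_mem_powersetCard s k hi]
  ring

theorem sum_powersetCard_sum_sq (b : α → ℝ) :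
    ∑ S ∈ s.powersetCard k, (∑ i ∈ S, b i) ^ 2
      = (#s).choose k * (k / #s * ∑ i ∈ s, b i ^ 2
        + k * (k - 1) / (#s * (#s - 1)) * ((∑ i ∈ s, b i) ^ 2 - ∑ i ∈ s, b i ^ 2)) := by
  have hsub : ∀ S ∈ s.powersetCard k, S ⊆ s := fun S hS => (mem_powersetCard.1 hS).1
  have hpairs : ∑ S ∈ s.powersetCard k, (∑ i ∈ S, b i) ^ 2
      = ∑ i ∈ s, ∑ j ∈ s, #{S ∈ s.powersetCard k | i ∈ S ∧ j ∈ S} * (b i * b j) := by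
    simp only [sq, sum_mul_sum]
    rw [sum_sum_eq_sum_sum_filter_mem s hsub]
    refine sum_congr rfl fun i _ => ?_
    rw [sum_sum_eq_sum_sum_filter_mem s fun S hS => hsub S (mem_filter.1 hS).1]
    simp only [sum_const, nsmul_eq_mul, filter_filter]
  have hrow : ∀ i ∈ s, ∑ j ∈ s, (#{S ∈ s.powersetCard k | i ∈ S ∧ j ∈ S} : ℝ) * (b i * b j)
      = (#s).choose k * (k / #s * b i ^ 2
        + k * (k - 1) / (#s * (#s - 1)) * (b i * ∑ j ∈ s, b j - b i ^ 2)) := by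
    intro i hi
    rw [← add_sum_erase s _ hi, sum_congr rfl fun j hj =>
      by rw [cast_card_filter_mem_and_mem_powersetCard s k hi (mem_of_mem_erase hj)
        (ne_of_mem_erase hj).symm], ← mul_sum, sum_erase_eq_sub hi]
    simp only [and_self, cast_card_filter_mem_powersetCard s k hi, mul_sum s b (b i)]
    ring
  rw [hpairs, sum_congr rfl hrow, ← mul_sum, sum_add_distrib, ← mul_sum, ← mul_sum, sum_sub_distrib,
    ← sum_mul, sq (∑ i ∈ s, b i)]

end Finset

section Sampling

variable {α : Type*} [DecidableEq α] (s : Finset α) (k : ℕ)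

def samplingMean (f : Finset α → ℝ) : ℝ :=
  (∑ S ∈ s.powersetCard k, f S) / (#s).choose k

def samplingVariance (f : Finset α → ℝ) : ℝ :=
  samplingMean s k fun S => (f S - samplingMean s k f) ^ 2

variable {s k} {f : Finset α → ℝ} {c : ℝ} {b : α → ℝ}

theorem samplingMean_of_eqOn_affine (hk : k ≤ #s)
    (hf : Set.EqOn f (fun S => c + ∑ i ∈ S, b i) (s.powersetCard k)) :
    samplingMean s k f = c + k / #s * ∑ i ∈ s, b i := by
  have hC : ((#s).choose k : ℝ) ≠ 0 := Nat.cast_ne_zero.2 (Nat.choose_pos hk).ne'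
  rw [samplingMean, sum_congr rfl hf, sum_add_distrib, sum_const, card_powersetCard, nsmul_eq_mul,
    sum_powersetCard_sum]
  field_simp

theorem samplingVariance_of_eqOn_affine (hs : 1 < #s) (hk : k ≤ #s)
    (hf : Set.EqOn f (fun S => c + ∑ i ∈ S, b i) (s.powersetCard k)) :
    samplingVariance s k f
      = k * (#s - k) / (#s * (#s - 1)) * (∑ i ∈ s, b i ^ 2 - (∑ i ∈ s, b i) ^ 2 / #s) := by
  have hC : ((#s).choose k : ℝ) ≠ 0 := Nat.cast_ne_zero.2 (Nat.choose_pos hk).ne'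
  have hs₀ : (#s : ℝ) ≠ 0 := by positivity
  have hs₁ : (#s : ℝ) - 1 ≠ 0 := sub_ne_zero.2 (by exact_mod_cast hs.ne')
  set μ := k / #s * ∑ i ∈ s, b i with hμ
  have hdev : Set.EqOn (fun S => (f S - samplingMean s k f) ^ 2)
      (fun S => (∑ i ∈ S, b i) ^ 2 - 2 * μ * ∑ i ∈ S, b i + μ ^ 2) (s.powersetCard k) := by
    intro S hS
    simp only [hf hS, samplingMean_of_eqOn_affine hk hf]
    ring
  rw [samplingVariance, samplingMean, sum_congr rfl hdev, sum_add_distrib, sum_sub_distrib,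
    ← mul_sum, sum_powersetCard_sum_sq, sum_powersetCard_sum, sum_const, card_powersetCard,
    nsmul_eq_mul, hμ]
  field_simp
  ring

end Sampling

namespace SimpleGraph

variable {V : Type*} [Fintype V] (G : SimpleGraph V) [DecidableRel G.Adj]

theorem sum_edgeFinset_lift_add [DecidableEq V] {β : Type*} [AddCommMonoid β] (g : V → β) :
    ∑ e ∈ G.edgeFinset, Sym2.lift ⟨fun u w => g u + g w, fun u w => add_comm (g u) (g w)⟩ e
      = ∑ u, G.degree u • g u := by
  have hlift : ∀ e ∈ G.edgeFinset,
      Sym2.lift ⟨fun u w => g u + g w, fun u w => add_comm (g u) (g w)⟩ e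
        = ∑ u ∈ e.toFinset, g u := by
    intro e he
    induction e with
    | _ x y => rw [Sym2.lift_mk, Sym2.toFinset_mk_eq, sum_pair (G.ne_of_adj (mem_edgeFinset.1 he))]
  rw [sum_congr rfl hlift, sum_comm' (t' := univ) (s' := fun u => G.incidenceFinset u)]
  · simp only [sum_const, card_incidenceFinset_eq_degree]
  · intro e u
    simp [mem_incidenceFinset, incidenceSet]

/-- The paper's `R_{j,(a)}`, with `x u = n_{ju}` the number of sample points at value `u`. -/
def averagingStat (m x : V → ℝ) : ℝ :=
  ∑ u, x u * (x u - 1) / m u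
    + ∑ e ∈ G.edgeFinset, Sym2.lift ⟨fun u w => x u * x w / (m u * m w), fun u w => by ring⟩ e

def averagingWeight (m : V → ℝ) (u : V) : ℝ :=
  2 + (G.degree u - 2) / m u

variable {G} {m : V → ℝ}

theorem averagingStat_sub_averagingStat_compl [DecidableEq V] (hm : ∀ u, m u ≠ 0) (x : V → ℝ) :
    G.averagingStat m x - G.averagingStat m (fun u => m u - x u)
      = ∑ u, x u * G.averagingWeight m u + (Fintype.card V - ∑ u, m u - #G.edgeFinset) := by
  have hvertex : ∀ u, x u * (x u - 1) / m u - (m u - x u) * (m u - x u - 1) / m u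
      = 2 * x u - 2 * (x u / m u) - m u + 1 := by
    intro u
    field_simp [hm u]
    ring
  have hedge : ∀ e ∈ G.edgeFinset,
      Sym2.lift ⟨fun u w => x u * x w / (m u * m w), fun u w => by ring⟩ e
        - Sym2.lift ⟨fun u w => (m u - x u) * (m w - x w) / (m u * m w), fun u w => by ring⟩ e
      = Sym2.lift ⟨fun u w => x u / m u + x w / m w, fun u w => add_comm _ _⟩ e - 1 := by
    intro e _
    induction e with
    | _ u w =>
      simp only [Sym2.lift_mk]
      field_simp [hm u, hm w]
      ring
  rw [averagingStat, averagingStat, add_sub_add_comm, ← sum_sub_distrib, ← sum_sub_distrib,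
    sum_congr rfl hedge, sum_sub_distrib (s := G.edgeFinset),
    sum_edgeFinset_lift_add G fun u => x u / m u, sum_congr rfl fun u _ => hvertex u]
  have hweight : ∀ u, x u * G.averagingWeight m u
      = (2 * x u - 2 * (x u / m u) - m u + 1) + G.degree u * (x u / m u) + (m u - 1) := by
    intro u
    rw [averagingWeight]
    field_simp [hm u]
    ring
  simp only [hweight, sum_add_distrib, sum_sub_distrib, sum_const, card_univ, nsmul_eq_mul]
  ring

theorem sum_mul_averagingWeight (hm : ∀ u, m u ≠ 0) :
    ∑ u, m u * G.averagingWeight m u = 2 * ∑ u, m u + 2 * (#G.edgeFinset - Fintype.card V) := by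
  have hdeg : ∑ u, (G.degree u : ℝ) = 2 * #G.edgeFinset := by
    exact_mod_cast G.sum_degrees_eq_twice_card_edges
  have hpoint : ∀ u, m u * G.averagingWeight m u = 2 * m u + G.degree u - 2 := by
    intro u
    rw [averagingWeight]
    field_simp [hm u]
    ring
  simp only [hpoint, sum_sub_distrib, sum_add_distrib, ← mul_sum, hdeg, sum_const, card_univ,
    nsmul_eq_mul]
  ring

theorem sum_mul_averagingWeight_sq (hm : ∀ u, m u ≠ 0) :
    ∑ u, m u * G.averagingWeight m u ^ 2
      = 4 * ∑ u, m u + 8 * (#G.edgeFinset - Fintype.card V) + ∑ u, (G.degree u - 2) ^ 2 / m u := by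
  have hpoint : ∀ u, m u * G.averagingWeight m u ^ 2
      = 4 * (m u * G.averagingWeight m u) - 4 * m u + (G.degree u - 2) ^ 2 / m u := by
    intro u
    rw [averagingWeight]
    field_simp [hm u]
    ring
  simp only [hpoint, sum_add_distrib, sum_sub_distrib, ← mul_sum, sum_mul_averagingWeight hm]
  ring

end SimpleGraph

/-- Mean and variance of the extended difference edge-count
statistic `R_{d,(a)}` under the permutation null distribution. -/
theorem mean_variance_Rda
    -- number of distinct values and multiplicities
    (K : ℕ) (m : Fin K → ℕ) (hm : ∀ u, 1 ≤ m u)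
    -- total sample size
    (N : ℕ) (hN : N = ∑ u, m u) (hNge : 2 ≤ N)
    -- value map with prescribed fiber sizes
    (v : Fin N → Fin K)
    (hv : ∀ u, (Finset.univ.filter (fun i => v i = u)).card = m u)
    -- similarity graph on the distinct values
    (C₀ : SimpleGraph (Fin K))
    -- sizes of sample 1 and sample 2
    (n₁ n₂ : ℕ) (hn₁' : n₁ ≤ N - 1) (hn₂ : n₂ = N - n₁)
    -- expectation under the permutation null distribution (uniform over
    -- all `n₁`-element subsets of `Fin N`)
    (E : (Finset (Fin N) → ℝ) → ℝ)
    (hE : ∀ f, E f =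
      (∑ S ∈ Finset.powersetCard n₁ (Finset.univ : Finset (Fin N)), f S) / (N.choose n₁ : ℝ))
    -- within-group counts
    (n1 : Fin K → Finset (Fin N) → ℝ)
    (hn1 : ∀ u S, n1 u S = ((S.filter (fun i => v i = u)).card : ℝ))
    (n2 : Fin K → Finset (Fin N) → ℝ)
    (hn2 : ∀ u S, n2 u S = (m u : ℝ) - n1 u S)
    -- the averaging statistics
    (R1a : Finset (Fin N) → ℝ)
    (hR1a : ∀ S, R1a S = ∑ u, n1 u S * (n1 u S - 1) / (m u : ℝ)
        + ∑ e ∈ C₀.edgeFinset,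
            Sym2.lift ⟨fun u w => n1 u S * n1 w S / ((m u : ℝ) * (m w : ℝ)),
              fun u w => by ring⟩ e)
    (R2a : Finset (Fin N) → ℝ)
    (hR2a : ∀ S, R2a S = ∑ u, n2 u S * (n2 u S - 1) / (m u : ℝ)
        + ∑ e ∈ C₀.edgeFinset,
            Sym2.lift ⟨fun u w => n2 u S * n2 w S / ((m u : ℝ) * (m w : ℝ)),
              fun u w => by ring⟩ e)
    -- variance under the permutation null distribution
    (Var : (Finset (Fin N) → ℝ) → ℝ)
    (hVar : ∀ f, Var f = E (fun S => (f S - E f) ^ 2))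
    -- the difference edge-count statistic
    (Rda : Finset (Fin N) → ℝ)
    (hRda : ∀ S, Rda S = R1a S - R2a S)
    :
    E Rda = ((N : ℝ) - (K : ℝ) + (C₀.edgeFinset.card : ℝ)) * ((n₁ : ℝ) - (n₂ : ℝ)) / (N : ℝ) ∧
    Var Rda = (4 * (n₁ : ℝ) * (n₂ : ℝ) / ((N : ℝ) * ((N : ℝ) - 1))) *
      ((∑ u, ((C₀.degree u : ℝ) - 2) ^ 2 / (4 * (m u : ℝ)))
        - ((C₀.edgeFinset.card : ℝ) - (K : ℝ)) ^ 2 / (N : ℝ)) := by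
  have hm₀ : ∀ u, (m u : ℝ) ≠ 0 := fun u => Nat.cast_ne_zero.2 (Nat.one_le_iff_ne_zero.1 (hm u))
  have hNsum : (N : ℝ) = ∑ u, (m u : ℝ) := by rw [hN, Nat.cast_sum]
  have hn₁N : n₁ ≤ N := hn₁'.trans (Nat.sub_le N 1)
  have hfiber : ∀ S (F : Fin K → ℝ), ∑ i ∈ S, F (v i) = ∑ u, n1 u S * F u := by
    intro S F
    rw [← sum_fiberwise' S v F]
    simp only [sum_const, nsmul_eq_mul, hn1]
  have hlin : ∀ S, Rda S
      = ((K : ℝ) - N - #C₀.edgeFinset) + ∑ i ∈ S, C₀.averagingWeight (fun u => (m u : ℝ)) (v i) := by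
    intro S
    have hdiff := C₀.averagingStat_sub_averagingStat_compl hm₀ fun u => n1 u S
    simp only [Fintype.card_fin, ← hNsum] at hdiff
    rw [hRda, hR1a, hR2a, hfiber]
    simp only [hn2]
    change C₀.averagingStat _ _ - C₀.averagingStat _ _ = _
    rw [hdiff, add_comm]
  have hmean : E = samplingMean univ n₁ := funext fun f => by rw [hE, samplingMean, card_fin]
  have hvariance : Var = samplingVariance univ n₁ := funext fun f => by rw [hVar, hmean]; rfl
  have hfiber_univ : ∀ F : Fin K → ℝ, ∑ i, F (v i) = ∑ u, (m u : ℝ) * F u := by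
    intro F
    simp only [hfiber, hn1, hv]
  have hk : n₁ ≤ #(univ : Finset (Fin N)) := by rwa [card_fin]
  rw [hmean, hvariance, samplingMean_of_eqOn_affine hk fun S _ => hlin S,
    samplingVariance_of_eqOn_affine (by rwa [card_fin]) hk fun S _ => hlin S,
    hfiber_univ fun u => C₀.averagingWeight _ u, hfiber_univ fun u => C₀.averagingWeight _ u ^ 2,
    C₀.sum_mul_averagingWeight hm₀, C₀.sum_mul_averagingWeight_sq hm₀, card_fin, Fintype.card_fin,
    ← hNsum, hn₂, Nat.cast_sub hn₁N]
  have hN₀ : (N : ℝ) ≠ 0 := by positivity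
  have hN₁ : (N : ℝ) - 1 ≠ 0 := sub_ne_zero.2 (by exact_mod_cast (by omega : N ≠ 1))
  constructor
  · field_simp
    ring
  · have hquarter : ∑ u, ((C₀.degree u : ℝ) - 2) ^ 2 / (4 * m u)
        = (∑ u, ((C₀.degree u : ℝ) - 2) ^ 2 / m u) / 4 := by
      rw [sum_div]
      exact sum_congr rfl fun u _ => by ring
    rw [hquarter]
    field_simp
    ring
end
end

section
/- Assume N ≥ 2. Under the permutation null distribution, E(R_{d,(u)}) = |Ḡ|(n₁ − n₂)/N, and Var(R_{d,(u)}) = (n₁n₂/(N(N−1))) · ( ∑_{i ∈ Fin N} deg_{Ḡ}(i)² − 4|Ḡ|²/N ). -/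
/-!
An edge inside `S` contributes `2` to `∑_{i ∈ S} deg i`, an edge across the cut contributes `1`,
so `R₁ - R₂ = ∑_{i ∈ S} deg i - |Ḡ|` is a linear statistic of the uniformly random `n₁`-subset `S`.
For such a statistic `∑_{i ∈ S} a i` everything follows from the inclusion counts: a fixed `i` lies
in `C(N,k) k / N` of the `k`-subsets and a fixed pair `i ≠ j` in `C(N,k) k (k-1) / (N (N-1))`.
After centring `a`, the off-diagonal terms of the second moment sum to `-∑ a_i²`, which gives the
variance `k (N-k) / (N (N-1)) · ∑ (a_i - ā)²`.
-/

open Finset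

namespace Finset

variable {α : Type*} [DecidableEq α]

theorem card_filter_powersetCard_subset_mul_choose (s t : Finset α) (n : ℕ) (hst : s ⊆ t) :
    #{u ∈ t.powersetCard n | s ⊆ u} * (#t).choose #s = (#t).choose n * n.choose #s := by
  by_cases hsn : #s ≤ n
  · rw [card_filter_powersetCard_subset s t n hst hsn, Nat.choose_mul hsn, mul_comm]
  · have hempty : {u ∈ t.powersetCard n | s ⊆ u} = ∅ :=
      filter_eq_empty_iff.2 fun u hu hsu =>
        hsn ((card_le_card hsu).trans (mem_powersetCard.1 hu).2.le)
    rw [hempty, Nat.choose_eq_zero_of_lt (not_le.1 hsn)]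
    simp

section Fintype

variable [Fintype α]

theorem sum_sum_mem_eq_sum_card_filter_mem_smul {M : Type*} [AddCommMonoid M]
    (P : Finset (Finset α)) (f : α → M) :
    ∑ S ∈ P, ∑ i ∈ S, f i = ∑ i, #{S ∈ P | i ∈ S} • f i := by
  rw [sum_comm' (t' := univ) (s' := fun i => {S ∈ P | i ∈ S}) (by simp)]
  simp only [sum_const]

theorem sum_sum_mem_sum_mem_eq_sum_card_filter_smul {M : Type*} [AddCommMonoid M]
    (P : Finset (Finset α)) (f : α → α → M) :
    ∑ S ∈ P, ∑ i ∈ S, ∑ j ∈ S, f i j = ∑ i, ∑ j, #{S ∈ P | i ∈ S ∧ j ∈ S} • f i j := by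
  simp only [← sum_product']
  rw [sum_comm' (t' := univ) (s' := fun p => {S ∈ P | p.1 ∈ S ∧ p.2 ∈ S}) (by simp)]
  simp only [sum_const, univ_product_univ]

theorem card_filter_mem_powersetCard_univ_mul (i : α) (k : ℕ) :
    (#{S ∈ powersetCard k univ | i ∈ S} : ℝ) * Fintype.card α = (Fintype.card α).choose k * k := by
  have h := card_filter_powersetCard_subset_mul_choose {i} univ k (subset_univ _)
  simp only [singleton_subset_iff, card_singleton, Nat.choose_one_right, card_univ] at h
  exact_mod_cast h

theorem card_filter_mem_mem_powersetCard_univ_mul {i j : α} (hij : i ≠ j) (k : ℕ) :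
    (#{S ∈ powersetCard k univ | i ∈ S ∧ j ∈ S} : ℝ) * (Fintype.card α * (Fintype.card α - 1)) =
      (Fintype.card α).choose k * (k * (k - 1)) := by
  have h := card_filter_powersetCard_subset_mul_choose {i, j} univ k (subset_univ _)
  simp only [insert_subset_iff, singleton_subset_iff, card_pair hij, card_univ] at h
  have hR := congrArg (fun n : ℕ => (n : ℝ) * 2) h
  simp only [Nat.cast_mul, Nat.cast_choose_two] at hR
  linear_combination hR

theorem sum_powersetCard_sum_mem_mul (k : ℕ) (a : α → ℝ) :
    (∑ S ∈ powersetCard k univ, ∑ i ∈ S, a i) * Fintype.card α =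
      (Fintype.card α).choose k * k * ∑ i, a i := by
  simp only [sum_sum_mem_eq_sum_card_filter_mem_smul, nsmul_eq_mul, sum_mul, mul_sum]
  refine sum_congr rfl fun i _ => ?_
  linear_combination a i * card_filter_mem_powersetCard_univ_mul i k

theorem sum_powersetCard_sq_sum_mem_mul (k : ℕ) (a : α → ℝ) :
    (∑ S ∈ powersetCard k univ, (∑ i ∈ S, a i) ^ 2) * (Fintype.card α * (Fintype.card α - 1)) =
      (Fintype.card α).choose k * (k * (k - 1) * (∑ i, a i) ^ 2 +
        k * (Fintype.card α - k) * ∑ i, a i ^ 2) := by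
  set N : ℝ := (Fintype.card α : ℝ)
  set C : ℝ := ((Fintype.card α).choose k : ℝ)
  have hcount : ∀ i j : α, (#{S ∈ powersetCard k univ | i ∈ S ∧ j ∈ S} : ℝ) * (N * (N - 1)) =
      C * (k * (k - 1)) + if i = j then C * (k * (N - k)) else 0 := by
    intro i j
    rcases eq_or_ne i j with rfl | hij
    · simp only [and_self, if_true]
      linear_combination (N - 1) * card_filter_mem_powersetCard_univ_mul i k
    · simpa [hij] using card_filter_mem_mem_powersetCard_univ_mul hij k
  calc (∑ S ∈ powersetCard k univ, (∑ i ∈ S, a i) ^ 2) * (N * (N - 1))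
      = ∑ i, ∑ j, (#{S ∈ powersetCard k univ | i ∈ S ∧ j ∈ S} : ℝ) * (N * (N - 1)) *
          (a i * a j) := by
        simp only [sq, sum_mul_sum]
        rw [sum_sum_mem_sum_mem_eq_sum_card_filter_smul, sum_mul]
        refine sum_congr rfl fun i _ => ?_
        rw [sum_mul]
        exact sum_congr rfl fun j _ => by rw [nsmul_eq_mul]; ring
    _ = ∑ i, ∑ j, (C * (k * (k - 1)) + if i = j then C * (k * (N - k)) else 0) *
          (a i * a j) := by simp only [hcount]
    _ = C * (k * (k - 1) * (∑ i, a i) ^ 2 + k * (N - k) * ∑ i, a i ^ 2) := by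
        simp only [add_mul, ite_mul, zero_mul, sum_add_distrib, sum_ite_eq, mem_univ, if_true,
          ← mul_sum, sq, sum_mul_sum]
        ring

theorem sum_powersetCard_sum_mem_sub_div_choose {k : ℕ} (hk : k ≤ Fintype.card α)
    (hα : 0 < Fintype.card α) (a : α → ℝ) (c : ℝ) :
    (∑ S ∈ powersetCard k univ, (∑ i ∈ S, a i - c)) / (Fintype.card α).choose k =
      k / Fintype.card α * ∑ i, a i - c := by
  have hC : ((Fintype.card α).choose k : ℝ) ≠ 0 := by exact_mod_cast (Nat.choose_pos hk).ne'
  have hN : (Fintype.card α : ℝ) ≠ 0 := by exact_mod_cast hα.ne'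
  rw [sum_sub_distrib, sum_const, card_powersetCard, card_univ, nsmul_eq_mul, div_eq_iff hC]
  field_simp
  linear_combination sum_powersetCard_sum_mem_mul k a

theorem sum_powersetCard_sq_sum_mem_sub_div_choose {k : ℕ} (hk : k ≤ Fintype.card α)
    (hα : 2 ≤ Fintype.card α) (a : α → ℝ) :
    (∑ S ∈ powersetCard k univ, (∑ i ∈ S, a i - k / Fintype.card α * ∑ i, a i) ^ 2) /
        (Fintype.card α).choose k =
      k * (Fintype.card α - k) / (Fintype.card α * (Fintype.card α - 1)) *
        (∑ i, a i ^ 2 - (∑ i, a i) ^ 2 / Fintype.card α) := by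
  have hC : ((Fintype.card α).choose k : ℝ) ≠ 0 := by exact_mod_cast (Nat.choose_pos hk).ne'
  have h2N : (2 : ℝ) ≤ Fintype.card α := by exact_mod_cast hα
  set N : ℝ := (Fintype.card α : ℝ) with hNdef
  have hN : N ≠ 0 := by positivity
  have hN1 : N - 1 ≠ 0 := by linarith
  set b : α → ℝ := fun i => a i - (∑ j, a j) / N
  have hcenter : ∀ S ∈ powersetCard k univ, ∑ i ∈ S, a i - k / N * ∑ i, a i = ∑ i ∈ S, b i := by
    intro S hS
    rw [sum_sub_distrib, sum_const, (mem_powersetCard.1 hS).2, nsmul_eq_mul]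
    ring
  have hb : ∑ i, b i = 0 := by
    simp only [b, sum_sub_distrib, sum_const, card_univ, nsmul_eq_mul]
    field_simp
    ring
  have hb2 : ∑ i, b i ^ 2 = ∑ i, a i ^ 2 - (∑ i, a i) ^ 2 / N := by
    simp only [b, sub_sq, sum_add_distrib, sum_sub_distrib, ← sum_mul, ← mul_sum, sum_const,
      card_univ, nsmul_eq_mul]
    field_simp
    ring
  have key := sum_powersetCard_sq_sum_mem_mul k b
  rw [hb, ← hNdef] at key
  rw [sum_congr rfl fun S hS => by rw [hcenter S hS], ← hb2, div_eq_iff hC]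
  field_simp
  linear_combination key

end Fintype

end Finset

theorem Sym2.ite_forall_mem_add_one {α : Type*} [DecidableEq α] {e : Sym2 α} (he : ¬e.IsDiag)
    (S : Finset α) [Decidable (∀ x ∈ e, x ∈ S)] [Decidable (∀ x ∈ e, x ∉ S)] :
    (if ∀ x ∈ e, x ∈ S then 1 else 0) + 1 = #{x ∈ S | x ∈ e} + if ∀ x ∈ e, x ∉ S then 1 else 0 := by
  split_ifs with hin hout hout <;>
  · obtain ⟨⟨a, b⟩, rfl⟩ := Sym2.mk_surjective e
    have hfilter : {x ∈ S | x ∈ s(a, b)} = {a, b} ∩ S := by ext; simp [Sym2.mem_iff, and_comm]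
    simp only [Function.uncurry_apply_pair, Sym2.mk_isDiag_iff, Sym2.mem_iff, forall_eq_or_imp,
      forall_eq] at *
    by_cases ha : a ∈ S <;> by_cases hb : b ∈ S <;>
      simp_all [insert_inter_of_mem, insert_inter_of_notMem]

namespace SimpleGraph
variable {V : Type*} [Fintype V] [DecidableEq V] (G : SimpleGraph V) [Fintype G.edgeSet]
  [LocallyFinite G]

theorem card_edges_inside_add_card_edgeFinset (S : Finset V) :
    #{e ∈ G.edgeFinset | ∀ x ∈ e, x ∈ S} + #G.edgeFinset =
      ∑ i ∈ S, G.degree i + #{e ∈ G.edgeFinset | ∀ x ∈ e, x ∉ S} := by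
  have hdeg : ∑ i ∈ S, G.degree i = ∑ e ∈ G.edgeFinset, #{x ∈ S | x ∈ e} := by
    simp only [← card_incidenceFinset_eq_degree, incidenceFinset_eq_filter]
    exact sum_card_bipartiteAbove_eq_sum_card_bipartiteBelow (fun x e => x ∈ e)
  rw [hdeg, card_filter, card_filter, card_eq_sum_ones, ← sum_add_distrib, ← sum_add_distrib]
  refine sum_congr rfl fun e he => Sym2.ite_forall_mem_add_one ?_ S
  exact G.not_isDiag_of_mem_edgeSet (mem_edgeFinset.1 he)

end SimpleGraph

open scoped Classical

theorem mean_variance_Rdu_general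
    -- total sample size
    (N : ℕ) (hNge : 2 ≤ N)
    -- sizes of sample 1 and sample 2
    (n₁ n₂ : ℕ) (hn₁' : n₁ ≤ N - 1) (hn₂ : n₂ = N - n₁)
    -- expectation under the permutation null distribution (uniform over
    -- all `n₁`-element subsets of `Fin N`)
    (E : (Finset (Fin N) → ℝ) → ℝ)
    (hE : ∀ f, E f =
      (∑ S ∈ Finset.powersetCard n₁ (Finset.univ : Finset (Fin N)), f S) / (N.choose n₁ : ℝ))
    -- the union graph Ḡ on the observations
    (Gbar : SimpleGraph (Fin N))
    -- the union statistics: edge-counts within sample 1 and within sample 2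
    (R1u : Finset (Fin N) → ℝ)
    (hR1u : ∀ S, R1u S =
      ((Gbar.edgeFinset.filter (fun e => ∀ x ∈ e, x ∈ S)).card : ℝ))
    (R2u : Finset (Fin N) → ℝ)
    (hR2u : ∀ S, R2u S =
      ((Gbar.edgeFinset.filter (fun e => ∀ x ∈ e, x ∉ S)).card : ℝ))
    -- variance under the permutation null distribution
    (Var : (Finset (Fin N) → ℝ) → ℝ)
    (hVar : ∀ f, Var f = E (fun S => (f S - E f) ^ 2))
    -- the difference edge-count statistic
    (Rdu : Finset (Fin N) → ℝ)
    (hRdu : ∀ S, Rdu S = R1u S - R2u S)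
    :
    E Rdu = (Gbar.edgeFinset.card : ℝ) * ((n₁ : ℝ) - (n₂ : ℝ)) / (N : ℝ) ∧
    Var Rdu = ((n₁ : ℝ) * (n₂ : ℝ) / ((N : ℝ) * ((N : ℝ) - 1))) *
      ((∑ i, (Gbar.degree i : ℝ) ^ 2) - 4 * (Gbar.edgeFinset.card : ℝ) ^ 2 / (N : ℝ)) := by
  have hn₁N : n₁ ≤ Fintype.card (Fin N) := by rw [Fintype.card_fin]; omega
  have hN : 2 ≤ Fintype.card (Fin N) := by rwa [Fintype.card_fin]
  have hn₂' : (n₂ : ℝ) = N - n₁ := by rw [hn₂, Nat.cast_sub (by omega)]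
  have hdeg : ∑ i, (Gbar.degree i : ℝ) = 2 * #Gbar.edgeFinset := by
    exact_mod_cast Gbar.sum_degrees_eq_twice_card_edges
  have hlinear : ∀ S, Rdu S = ∑ i ∈ S, (Gbar.degree i : ℝ) - #Gbar.edgeFinset := by
    intro S
    rw [hRdu, hR1u, hR2u, sub_eq_sub_iff_add_eq_add]
    norm_cast
    -- `convert` reconciles the decidability instances of the two filters
    convert Gbar.card_edges_inside_add_card_edgeFinset S
  have hmean : E Rdu = n₁ / N * ∑ i, (Gbar.degree i : ℝ) - #Gbar.edgeFinset := by
    rw [hE, sum_congr rfl fun S _ => hlinear S]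
    simpa using sum_powersetCard_sum_mem_sub_div_choose hn₁N (by omega) _ _
  refine ⟨by rw [hmean, hdeg, hn₂']; field_simp; ring, ?_⟩
  have hcentered : ∀ S, Rdu S - E Rdu =
      ∑ i ∈ S, (Gbar.degree i : ℝ) - n₁ / N * ∑ i, (Gbar.degree i : ℝ) := by
    intro S
    rw [hlinear, hmean]
    ring
  rw [hVar, hE, sum_congr rfl fun S _ => by rw [hcentered S]]
  have hvar := sum_powersetCard_sq_sum_mem_sub_div_choose hn₁N hN fun i => (Gbar.degree i : ℝ)
  simp only [Fintype.card_fin] at hvar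
  rw [hvar, hdeg, hn₂']
  ring

/-- Mean and variance of the extended difference edge-count
statistic `R_{d,(u)}` under the permutation null distribution. -/
theorem mean_variance_Rdu
    -- number of distinct values and multiplicities
    (K : ℕ) (hK : 1 ≤ K) (m : Fin K → ℕ) (hm : ∀ u, 1 ≤ m u)
    -- total sample size
    (N : ℕ) (hN : N = ∑ u, m u) (hNge : 2 ≤ N)
    -- value map with prescribed fiber sizes
    (v : Fin N → Fin K)
    (hv : ∀ u, (Finset.univ.filter (fun i => v i = u)).card = m u)
    -- similarity graph on the distinct values
    (C₀ : SimpleGraph (Fin K))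
    -- sizes of sample 1 and sample 2
    (n₁ n₂ : ℕ) (hn₁ : 1 ≤ n₁) (hn₁' : n₁ ≤ N - 1) (hn₂ : n₂ = N - n₁)
    -- expectation under the permutation null distribution (uniform over
    -- all `n₁`-element subsets of `Fin N`)
    (E : (Finset (Fin N) → ℝ) → ℝ)
    (hE : ∀ f, E f =
      (∑ S ∈ Finset.powersetCard n₁ (Finset.univ : Finset (Fin N)), f S) / (N.choose n₁ : ℝ))
    -- the union graph Ḡ on the observations
    (Gbar : SimpleGraph (Fin N))
    (hGbar : ∀ i j, Gbar.Adj i j ↔ i ≠ j ∧ (v i = v j ∨ C₀.Adj (v i) (v j)))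
    -- the union statistics: edge-counts within sample 1 and within sample 2
    (R1u : Finset (Fin N) → ℝ)
    (hR1u : ∀ S, R1u S =
      ((Gbar.edgeFinset.filter (fun e => ∀ x ∈ e, x ∈ S)).card : ℝ))
    (R2u : Finset (Fin N) → ℝ)
    (hR2u : ∀ S, R2u S =
      ((Gbar.edgeFinset.filter (fun e => ∀ x ∈ e, x ∉ S)).card : ℝ))
    -- variance under the permutation null distribution
    (Var : (Finset (Fin N) → ℝ) → ℝ)
    (hVar : ∀ f, Var f = E (fun S => (f S - E f) ^ 2))
    -- the difference edge-count statistic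
    (Rdu : Finset (Fin N) → ℝ)
    (hRdu : ∀ S, Rdu S = R1u S - R2u S)
    :
    E Rdu = (Gbar.edgeFinset.card : ℝ) * ((n₁ : ℝ) - (n₂ : ℝ)) / (N : ℝ) ∧
    Var Rdu = ((n₁ : ℝ) * (n₂ : ℝ) / ((N : ℝ) * ((N : ℝ) - 1))) *
      ((∑ i, (Gbar.degree i : ℝ) ^ 2) - 4 * (Gbar.edgeFinset.card : ℝ) ^ 2 / (N : ℝ)) :=
  mean_variance_Rdu_general N hNge n₁ n₂ hn₁' hn₂ E hE Gbar R1u hR1u R2u hR2u Var hVar Rdu hRdu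
end

section
/- Assume N ≥ 4. Under the permutation null distribution, Cov(R_{w,(u)}, R_{d,(u)}) = 0, where R_{w,(u)} = ((n₂−1)R_{1,(u)} + (n₁−1)R_{2,(u)})/(N−2) and R_{d,(u)} = R_{1,(u)} − R_{2,(u)}. (This orthogonality is the key fact behind the decomposition S_{(u)} = Z_{w,(u)}² + Z_{d,(u)}² in Lemma 3 of the paper.) -/
/-!
Write `X_k(S) = 1[k ∈ S]`. Summing `1[x ∈ S]` over the edges at `x` gives
`R₁ - R₂ = ∑_{x ∈ S} deg x - |Ḡ|`, an affine function of the `X_k`.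

On the other side, `(n₂ - 1) R₁ + (n₁ - 1) R₂` is a sum over edges `{i, j}` of
`(n₂ - 1) X_i X_j + (n₁ - 1) (1 - X_i) (1 - X_j)`, and the sum of this weight over the
`n₁`-subsets `S ∋ k` is `(n₂ - 1) · #{S ⊇ {i, j}}`, whether or not `k ∈ {i, j}`. This
follows from `(N)_a · #{S ⊇ A} = (n₁)_a · C(N, n₁)` for `#A = a ≤ 3`.

Finally, a statistic `f` whose sums over `{S ∋ k}` do not depend on `k` is uncorrelated
with every affine function of the `X_k`: since `∑_k X_k = n₁`, double counting shows that
these sums equal `n₁ / N` times the total sum of `f`, i.e. `E[f X_k] = E[f] E[X_k]`.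
-/

open Finset
open scoped Classical

theorem cast_descFactorial_eq_prod_range {R : Type*} [CommRing R] (m a : ℕ) :
    (m.descFactorial a : R) = ∏ i ∈ range a, ((m : R) - i) := by
  rw [← descPochhammer_eval_eq_descFactorial, descPochhammer_eval_eq_prod_range]

section

variable {α : Type*} [Fintype α]

/-- Expectation under the permutation null distribution: `S` is a uniformly random
`n`-subset of `α`. -/
noncomputable def nullMean (n : ℕ) (f : Finset α → ℝ) : ℝ :=
  (∑ S ∈ powersetCard n univ, f S) / (Fintype.card α).choose n

noncomputable def nullCov (n : ℕ) (f g : Finset α → ℝ) : ℝ :=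
  nullMean n fun S => (f S - nullMean n f) * (g S - nullMean n g)

theorem nullCov_eq_zero_of_mul_sum_eq {n : ℕ} {f g : Finset α → ℝ}
    (h : (Fintype.card α).choose n * ∑ S ∈ powersetCard n univ, f S * g S
      = (∑ S ∈ powersetCard n univ, f S) * ∑ S ∈ powersetCard n univ, g S) :
    nullCov n f g = 0 := by
  rcases eq_or_ne ((Fintype.card α).choose n : ℝ) 0 with hC | hC
  · simp [nullCov, nullMean, hC]
  have hP : (#(powersetCard n (univ : Finset α)) : ℝ) = (Fintype.card α).choose n := by
    rw [card_powersetCard, card_univ]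
  simp only [nullCov, nullMean, sub_mul, mul_sub, sum_sub_distrib, ← sum_mul, ← mul_sum,
    sum_const, nsmul_eq_mul, hP]
  field_simp
  linear_combination h

variable [DecidableEq α]

theorem descFactorial_mul_card_filter_subset (n : ℕ) (A : Finset α) :
    (Fintype.card α).descFactorial #A * #{S ∈ powersetCard n univ | A ⊆ S}
      = n.descFactorial #A * (Fintype.card α).choose n := by
  by_cases hA : #A ≤ n
  · rw [card_filter_powersetCard_subset A univ n (subset_univ A) hA, card_univ,
      Nat.descFactorial_eq_factorial_mul_choose, Nat.descFactorial_eq_factorial_mul_choose,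
      mul_assoc, mul_assoc, ← Nat.choose_mul hA, mul_comm (n.choose _)]
  · have hempty : #{S ∈ powersetCard n univ | A ⊆ S} = 0 := by
      refine card_eq_zero.2 (filter_eq_empty_iff.2 fun S hS hAS => hA ?_)
      exact (card_le_card hAS).trans (mem_powersetCard.1 hS).2.le
    rw [hempty, Nat.descFactorial_eq_zero_iff_lt.2 (not_le.1 hA), mul_zero, zero_mul]

theorem prod_range_mul_card_filter_subset (n : ℕ) (A : Finset α) :
    (∏ i ∈ range #A, ((Fintype.card α : ℝ) - i)) * #{S ∈ powersetCard n univ | A ⊆ S}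
      = (∏ i ∈ range #A, ((n : ℝ) - i)) * (Fintype.card α).choose n := by
  rw [← cast_descFactorial_eq_prod_range, ← cast_descFactorial_eq_prod_range]
  exact_mod_cast descFactorial_mul_card_filter_subset n A

theorem card_mul_card_filter_mem (n : ℕ) (k : α) :
    (Fintype.card α : ℝ) * #{S ∈ powersetCard n univ | k ∈ S}
      = n * (Fintype.card α).choose n := by
  simpa using prod_range_mul_card_filter_subset n {k}

theorem sum_mul_sum_eq_sum_mul_sum_filter_mem {R : Type*} [CommSemiring R]
    (s : Finset (Finset α)) (f : Finset α → R) (d : α → R) :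
    ∑ S ∈ s, f S * ∑ x ∈ S, d x = ∑ x, d x * ∑ S ∈ s with x ∈ S, f S := by
  simp_rw [mul_sum, sum_filter]
  rw [sum_comm]
  refine sum_congr rfl fun S _ => ?_
  rw [← sum_filter, filter_mem_eq_inter, univ_inter]
  exact sum_congr rfl fun x _ => mul_comm _ _

theorem nullCov_sum_add_const_eq_zero_of_sum_filter_mem_eq {n : ℕ} {f : Finset α → ℝ}
    {c : ℝ} (hf : ∀ k, ∑ S ∈ powersetCard n univ with k ∈ S, f S = c) (d : α → ℝ) (b : ℝ) :
    nullCov n f (fun S => ∑ x ∈ S, d x + b) = 0 := by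
  set P := powersetCard n (univ : Finset α)
  set C : ℝ := (((Fintype.card α).choose n : ℕ) : ℝ)
  set N : ℝ := ((Fintype.card α : ℕ) : ℝ)
  have hN (x : α) : N ≠ 0 :=
    have := Nonempty.intro x; Nat.cast_ne_zero.2 Fintype.card_ne_zero
  -- double counting the pairs `x ∈ S`, weighted by `f S`, using `#S = n`
  have hc (x : α) : c = n * (∑ S ∈ P, f S) / N := by
    have := sum_mul_sum_eq_sum_mul_sum_filter_mem P f 1
    simp only [Pi.one_apply, one_mul, hf, sum_const, card_univ, nsmul_eq_mul, mul_one] at this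
    rw [eq_div_iff (hN x), mul_comm, ← this, mul_sum]
    exact sum_congr rfl fun S hS => by rw [(mem_powersetCard.1 hS).2, mul_comm]
  have hcount (x : α) : (#{S ∈ P | x ∈ S} : ℝ) = n * C / N := by
    rw [eq_div_iff (hN x), mul_comm, card_mul_card_filter_mem]
  have hsum_f : ∑ S ∈ P, f S * (∑ x ∈ S, d x + b)
      = n * (∑ S ∈ P, f S) / N * ∑ x, d x + (∑ S ∈ P, f S) * b := by
    rw [sum_congr rfl fun S _ => mul_add _ _ _, sum_add_distrib,
      sum_mul_sum_eq_sum_mul_sum_filter_mem, ← sum_mul, mul_sum]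
    exact congrArg (· + _) (sum_congr rfl fun x _ => by rw [hf, hc x, mul_comm])
  have hsum_one : ∑ S ∈ P, (∑ x ∈ S, d x + b) = n * C / N * ∑ x, d x + C * b := by
    have := sum_mul_sum_eq_sum_mul_sum_filter_mem P 1 d
    simp only [Pi.one_apply, one_mul, sum_const, nsmul_eq_mul, mul_one] at this
    rw [sum_add_distrib, this, sum_const, card_powersetCard, card_univ, nsmul_eq_mul, mul_sum]
    exact congrArg (· + _) (sum_congr rfl fun x _ => by rw [hcount x, mul_comm])
  apply nullCov_eq_zero_of_mul_sum_eq
  rw [hsum_f, hsum_one]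
  ring

theorem sum_filter_mem_edge_weight {n : ℕ} {e : Sym2 α} (he : ¬e.IsDiag) (k : α) :
    ∑ S ∈ powersetCard n univ with k ∈ S,
      (((Fintype.card α : ℝ) - n - 1) * (if ∀ x ∈ e, x ∈ S then 1 else 0)
        + ((n : ℝ) - 1) * (if ∀ x ∈ e, x ∉ S then 1 else 0))
      = ((Fintype.card α : ℝ) - n - 1) * (n * (n - 1) * (Fintype.card α).choose n
          / (Fintype.card α * (Fintype.card α - 1))) := by
  induction e using Sym2.ind with | _ i j => ?_
  have hij : i ≠ j := by simpa using he
  have hN : (Fintype.card α : ℝ) * (Fintype.card α - 1) ≠ 0 := by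
    have : (1 : ℝ) < Fintype.card α := by
      exact_mod_cast Fintype.one_lt_card_iff.2 ⟨i, j, hij⟩
    exact mul_ne_zero (by linarith) (by linarith)
  simp only [Sym2.mem_iff, forall_eq_or_imp, forall_eq]
  set P := powersetCard n (univ : Finset α)
  set N : ℝ := ((Fintype.card α : ℕ) : ℝ)
  set C : ℝ := (((Fintype.card α).choose n : ℕ) : ℝ)
  have hpair {a b : α} (hab : a ≠ b) :
      N * (N - 1) * #{S ∈ P | {a, b} ⊆ S} = n * (n - 1) * C := by
    simpa [card_pair hab, prod_range_succ] using prod_range_mul_card_filter_subset n {a, b}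
  rw [sum_filter, mul_div_assoc', eq_div_iff hN]
  by_cases hk : k = i ∨ k = j
  · have hpt (S : Finset α) : (if k ∈ S then (N - n - 1) * (if i ∈ S ∧ j ∈ S then 1 else 0)
          + (n - 1) * (if i ∉ S ∧ j ∉ S then 1 else 0) else 0)
        = (N - n - 1) * (if {i, j} ⊆ S then 1 else 0) := by
      simp only [insert_subset_iff, singleton_subset_iff]
      rcases hk with rfl | rfl <;> split_ifs <;> simp_all
    rw [sum_congr rfl fun S _ => hpt S, ← mul_sum, sum_boole]
    linear_combination (N - n - 1) * hpair hij
  · obtain ⟨hki, hkj⟩ := not_or.1 hk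
    have hpt (S : Finset α) : (if k ∈ S then (N - n - 1) * (if i ∈ S ∧ j ∈ S then 1 else 0)
          + (n - 1) * (if i ∉ S ∧ j ∉ S then 1 else 0) else 0)
        = (N - 2) * (if {i, j, k} ⊆ S then 1 else 0) + (n - 1) * ((if k ∈ S then 1 else 0)
          - (if {i, k} ⊆ S then 1 else 0) - (if {j, k} ⊆ S then 1 else 0)) := by
      simp only [insert_subset_iff, singleton_subset_iff]
      split_ifs <;> simp_all
      ring
    have htriple : N * (N - 1) * (N - 2) * #{S ∈ P | {i, j, k} ⊆ S}
        = n * (n - 1) * (n - 2) * C := by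
      have hcard : #{i, j, k} = 3 := by
        rw [card_insert_of_notMem (by simp [hij, Ne.symm hki]), card_pair (Ne.symm hkj)]
      simpa [hcard, prod_range_succ, mul_assoc] using
        prod_range_mul_card_filter_subset n {i, j, k}
    rw [sum_congr rfl fun S _ => hpt S, sum_add_distrib, ← mul_sum, ← mul_sum, sum_sub_distrib,
      sum_sub_distrib, sum_boole, sum_boole, sum_boole, sum_boole]
    linear_combination htriple + (n - 1) * (N - 1) * card_mul_card_filter_mem n k
      - (n - 1) * hpair (Ne.symm hki) - (n - 1) * hpair (Ne.symm hkj)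

namespace SimpleGraph

variable (G : SimpleGraph α) [DecidableRel G.Adj]

theorem sum_filter_mem_weighted_card_edges (n : ℕ) (k : α) :
    ∑ S ∈ powersetCard n univ with k ∈ S,
      (((Fintype.card α : ℝ) - n - 1) * #{e ∈ G.edgeFinset | ∀ x ∈ e, x ∈ S}
        + ((n : ℝ) - 1) * #{e ∈ G.edgeFinset | ∀ x ∈ e, x ∉ S})
      = #G.edgeFinset * (((Fintype.card α : ℝ) - n - 1) * (n * (n - 1)
          * (Fintype.card α).choose n / (Fintype.card α * (Fintype.card α - 1)))) := by
  simp only [← sum_boole, mul_sum, ← sum_add_distrib]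
  rw [sum_comm, ← nsmul_eq_mul, ← sum_const]
  exact sum_congr rfl fun e he =>
    sum_filter_mem_edge_weight (G.not_isDiag_of_mem_edgeSet (G.mem_edgeFinset.1 he)) k

theorem card_filter_forall_mem_sub_card_filter_forall_not_mem (S : Finset α) :
    (#{e ∈ G.edgeFinset | ∀ x ∈ e, x ∈ S} : ℝ) - #{e ∈ G.edgeFinset | ∀ x ∈ e, x ∉ S}
      = ∑ x ∈ S, (G.degree x : ℝ) - #G.edgeFinset := by
  simp only [← G.card_incidenceFinset_eq_degree, G.incidenceFinset_eq_filter, ← sum_boole]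
  rw [sum_comm, ← sum_sub_distrib, card_eq_sum_ones, Nat.cast_sum, ← sum_sub_distrib]
  refine sum_congr rfl fun e he => ?_
  induction e using Sym2.ind with | _ i j => ?_
  have hij : i ≠ j := G.ne_of_adj (G.mem_edgeFinset.1 he)
  have hsplit (x : α) : (if x = i ∨ x = j then (1 : ℝ) else 0)
      = (if i = x then 1 else 0) + (if j = x then 1 else 0) := by
    by_cases hi : x = i <;> by_cases hj : x = j <;> simp_all [eq_comm]
  simp only [Sym2.mem_iff, forall_eq_or_imp, forall_eq, hsplit, sum_add_distrib, sum_ite_eq]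
  split_ifs <;> simp_all

end SimpleGraph

end

theorem cov_Rwu_Rdu_eq_zero_general
    -- total sample size
    (N : ℕ)
    -- sizes of sample 1 and sample 2
    (n₁ n₂ : ℕ) (hn₁' : n₁ ≤ N - 1) (hn₂ : n₂ = N - n₁)
    -- expectation under the permutation null distribution (uniform over
    -- all `n₁`-element subsets of `Fin N`)
    (E : (Finset (Fin N) → ℝ) → ℝ)
    (hE : ∀ f, E f =
      (∑ S ∈ Finset.powersetCard n₁ (Finset.univ : Finset (Fin N)), f S) / (N.choose n₁ : ℝ))
    -- the union graph Ḡ on the observations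
    (Gbar : SimpleGraph (Fin N))
    -- the union statistics: edge-counts within sample 1 and within sample 2
    (R1u : Finset (Fin N) → ℝ)
    (hR1u : ∀ S, R1u S =
      ((Gbar.edgeFinset.filter (fun e => ∀ x ∈ e, x ∈ S)).card : ℝ))
    (R2u : Finset (Fin N) → ℝ)
    (hR2u : ∀ S, R2u S =
      ((Gbar.edgeFinset.filter (fun e => ∀ x ∈ e, x ∉ S)).card : ℝ))
    -- covariance under the permutation null distribution
    (Cov : (Finset (Fin N) → ℝ) → (Finset (Fin N) → ℝ) → ℝ)
    (hCov : ∀ f g, Cov f g = E (fun S => (f S - E f) * (g S - E g)))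
    -- the weighted edge-count statistic
    (Rwu : Finset (Fin N) → ℝ)
    (hRwu : ∀ S, Rwu S =
      (((n₂ : ℝ) - 1) * R1u S + ((n₁ : ℝ) - 1) * R2u S) / ((N : ℝ) - 2))
    -- the difference edge-count statistic
    (Rdu : Finset (Fin N) → ℝ)
    (hRdu : ∀ S, Rdu S = R1u S - R2u S)
    :
    Cov Rwu Rdu = 0 := by
  have hmean : E = nullMean n₁ := funext fun f => by rw [hE, nullMean, Fintype.card_fin]
  have hcov : Cov = nullCov n₁ := funext₂ fun f g => by rw [hCov, hmean, nullCov]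
  have hn₂' : (n₂ : ℝ) = N - n₁ := by rw [hn₂, Nat.cast_sub (by omega)]
  have hRd : Rdu = fun S => ∑ x ∈ S, (Gbar.degree x : ℝ) + -#Gbar.edgeFinset := by
    funext S
    rw [hRdu, hR1u, hR2u, ← sub_eq_add_neg]
    -- `convert` reconciles the `Decidable (∀ x ∈ e, _)` instances (`Fin` has its own)
    convert Gbar.card_filter_forall_mem_sub_card_filter_forall_not_mem S
  have hRw (k : Fin N) : ∑ S ∈ powersetCard n₁ univ with k ∈ S, Rwu S = #Gbar.edgeFinset
      * ((N - n₁ - 1) * (n₁ * (n₁ - 1) * N.choose n₁ / (N * (N - 1)))) / (N - 2) := by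
    simp only [hRwu, hR1u, hR2u, hn₂', ← sum_div]
    congr 1
    convert Gbar.sum_filter_mem_weighted_card_edges n₁ k <;> simp
  rw [hcov, hRd]
  exact nullCov_sum_add_const_eq_zero_of_sum_filter_mem_eq hRw _ _

/-- The weighted and difference union edge-count statistics
are uncorrelated under the permutation null distribution. -/
theorem cov_Rwu_Rdu_eq_zero
    -- number of distinct values and multiplicities
    (K : ℕ) (hK : 1 ≤ K) (m : Fin K → ℕ) (hm : ∀ u, 1 ≤ m u)
    -- total sample size
    (N : ℕ) (hN : N = ∑ u, m u) (hNge : 4 ≤ N)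
    -- value map with prescribed fiber sizes
    (v : Fin N → Fin K)
    (hv : ∀ u, (Finset.univ.filter (fun i => v i = u)).card = m u)
    -- similarity graph on the distinct values
    (C₀ : SimpleGraph (Fin K))
    -- sizes of sample 1 and sample 2
    (n₁ n₂ : ℕ) (hn₁ : 1 ≤ n₁) (hn₁' : n₁ ≤ N - 1) (hn₂ : n₂ = N - n₁)
    -- expectation under the permutation null distribution (uniform over
    -- all `n₁`-element subsets of `Fin N`)
    (E : (Finset (Fin N) → ℝ) → ℝ)
    (hE : ∀ f, E f =
      (∑ S ∈ Finset.powersetCard n₁ (Finset.univ : Finset (Fin N)), f S) / (N.choose n₁ : ℝ))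
    -- the union graph Ḡ on the observations
    (Gbar : SimpleGraph (Fin N))
    (hGbar : ∀ i j, Gbar.Adj i j ↔ i ≠ j ∧ (v i = v j ∨ C₀.Adj (v i) (v j)))
    -- the union statistics: edge-counts within sample 1 and within sample 2
    (R1u : Finset (Fin N) → ℝ)
    (hR1u : ∀ S, R1u S =
      ((Gbar.edgeFinset.filter (fun e => ∀ x ∈ e, x ∈ S)).card : ℝ))
    (R2u : Finset (Fin N) → ℝ)
    (hR2u : ∀ S, R2u S =
      ((Gbar.edgeFinset.filter (fun e => ∀ x ∈ e, x ∉ S)).card : ℝ))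
    -- covariance under the permutation null distribution
    (Cov : (Finset (Fin N) → ℝ) → (Finset (Fin N) → ℝ) → ℝ)
    (hCov : ∀ f g, Cov f g = E (fun S => (f S - E f) * (g S - E g)))
    -- the weighted edge-count statistic
    (Rwu : Finset (Fin N) → ℝ)
    (hRwu : ∀ S, Rwu S =
      (((n₂ : ℝ) - 1) * R1u S + ((n₁ : ℝ) - 1) * R2u S) / ((N : ℝ) - 2))
    -- the difference edge-count statistic
    (Rdu : Finset (Fin N) → ℝ)
    (hRdu : ∀ S, Rdu S = R1u S - R2u S)
    :
    Cov Rwu Rdu = 0 :=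
  cov_Rwu_Rdu_eq_zero_general N n₁ n₂ hn₁' hn₂ E hE Gbar R1u hR1u R2u hR2u Cov hCov Rwu hRwu Rdu
    hRdu
end
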